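/- arXiv:2103.02287 — 6 statements merged into one kernel-verified Lean document; each statement's English description precedes it below -/
import Mathlib

section
/- Suppose an inner policy improvement step π^core_old → π^core_new guarantees Q^{π^core_new}(s,a) ≥ Q^{π^core_old}(s,a) for all (s,a), let Δ = min_{(s,a)} (Q^{π^core_new}(s,a) − Q^{π^core_old}(s,a)), let N ≥ 4, and let C_0 be a uniform upper bound on |A^{π^core_new}(s,a)| and on |A^{π_old}((s,a'),a)|, where π_old is the mixed policy built from μ_old and π^core_old and π_mid is the mixed policy built from μ_old and π^core_new. If μ_old(s,a') ≤ Δ / (N · C_0 · Σ_{t=0}^∞ t γ^t) for all (s,a'), then Q^{π_mid}(s,a',a) − Q^{π_old}(s,a',a) ≥ (1 − 4/N)·Δ for all triples (s,a',a). -/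
open scoped BigOperators

noncomputable section

/-- A probability distribution on a finite type, given as a nonnegative
function summing to one. -/
def IsDist {X : Type*} [Fintype X] (d : X → ℝ) : Prop :=
  (∀ x, 0 ≤ d x) ∧ ∑ x, d x = 1

/-- A transition kernel: for each state-action pair, a distribution on states. -/
def IsKernel {S A : Type*} [Fintype S] (P : S → A → S → ℝ) : Prop :=
  ∀ s a, IsDist (P s a)

/-- A (stationary) stochastic policy: for each state, a distribution on actions. -/
def IsPolicy {S A : Type*} [Fintype A] (π : S → A → ℝ) : Prop :=
  ∀ s, IsDist (π s)

/-- The state-action distribution at time `t` of the trajectory generated by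
policy `π` in the MDP with transition kernel `P`, started from the initial
state-action distribution `d0`. -/
def saDist {S A : Type*} [Fintype S] [Fintype A]
    (P : S → A → S → ℝ) (π : S → A → ℝ) (d0 : S × A → ℝ) : ℕ → S × A → ℝ
  | 0 => d0
  | t + 1 => fun q => ∑ p : S × A, saDist P π d0 t p * P p.1 p.2 q.1 * π q.1 q.2

/-- The state-action value function `Q^π(s,a)`:
expected discounted return starting at state `s`, taking action `a` first and
following `π` afterwards. -/
def Qval {S A : Type*} [Fintype S] [Fintype A] [DecidableEq S] [DecidableEq A]
    (P : S → A → S → ℝ) (r : S → A → ℝ) (γ : ℝ) (π : S → A → ℝ) (s : S) (a : A) : ℝ :=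
  ∑' t : ℕ, γ ^ t *
    ∑ q : S × A, saDist P π (fun p => if p = (s, a) then 1 else 0) t q * r q.1 q.2

/-- The state value function `V^π(s)`. -/
def Vval {S A : Type*} [Fintype S] [Fintype A] [DecidableEq S] [DecidableEq A]
    (P : S → A → S → ℝ) (r : S → A → ℝ) (γ : ℝ) (π : S → A → ℝ) (s : S) : ℝ :=
  ∑ a : A, π s a * Qval P r γ π s a

/-- The advantage function `A^π(s,a) = Q^π(s,a) − V^π(s)`. -/
def Adv {S A : Type*} [Fintype S] [Fintype A] [DecidableEq S] [DecidableEq A]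
    (P : S → A → S → ℝ) (r : S → A → ℝ) (γ : ℝ) (π : S → A → ℝ) (s : S) (a : A) : ℝ :=
  Qval P r γ π s a - Vval P r γ π s

/-- Transition kernel of the augmented MDP whose states are pairs
`(state, previously executed action)` : `((s,a'),a) ↦ (s',a)` with `s' ~ P(·|s,a)`. -/
def augP {S A : Type*} [DecidableEq A] (P : S → A → S → ℝ) :
    S × A → A → S × A → ℝ :=
  fun x a y => if y.2 = a then P x.1 a y.1 else 0

/-- Reward of the augmented MDP: `r((s,a'),a) = r(s,a)`. -/
def augR {S A : Type*} (r : S → A → ℝ) : S × A → A → ℝ :=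
  fun x a => r x.1 a

/-- A policy on the base MDP viewed as a policy on the augmented MDP. -/
def liftPolicy {S A : Type*} (π : S → A → ℝ) : S × A → A → ℝ :=
  fun x a => π x.1 a

/-- The mixed (PIC-augmented) policy
`π(·|s,a') = μ(s,a')·δ_{a'} + (1−μ(s,a'))·π^core(·|s)`,
a stationary policy on the augmented MDP. -/
def mixed {S A : Type*} [DecidableEq A] (μ : S → A → ℝ) (πc : S → A → ℝ) :
    S × A → A → ℝ :=
  fun x a => μ x.1 x.2 * (if a = x.2 then 1 else 0) + (1 - μ x.1 x.2) * πc x.1 a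

/-!
Write `Q^{mid} - Q^{old}` as the sum of `Q^{mid} - Q^{lift new}`, `Q^{lift new} - Q^{lift old}`
and `Q^{lift old} - Q^{old}`, where `lift π` ignores the previous action. A lifted policy has the
same Q-function in the augmented MDP as in the original one (both solve the same Bellman
equation, whose solution is unique by contraction), so the middle term is at least `Δ`.
The outer terms compare two policies `π, π'`: by contraction again,
`|Q^{π'} - Q^π| ≤ γ ε / (1 - γ)` whenever `ε` bounds the one-step gain
`∑_b (π' - π)(b|x) Q^π(x,b)`. Against its own core, a mixed policy has one-step gain
`μ(x)` times an advantage, hence `ε = μ_max C₀` and `ε = 2 μ_max C₀`. Finally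
`∑ t γ^t = γ / (1 - γ)^2`, so the bound on `μ_max` makes `γ μ_max C₀ / (1 - γ) ≤ Δ / N`.
-/

lemma IsDist.abs_sum_mul_le {X : Type*} [Fintype X] {d : X → ℝ} (hd : IsDist d)
    {g : X → ℝ} {c : ℝ} (hg : ∀ x, |g x| ≤ c) : |∑ x, d x * g x| ≤ c :=
  calc |∑ x, d x * g x| ≤ ∑ x, d x * c := by
        refine (Finset.abs_sum_le_sum_abs _ _).trans (Finset.sum_le_sum fun x _ => ?_)
        rw [abs_mul, abs_of_nonneg (hd.1 x)]
        exact mul_le_mul_of_nonneg_left (hg x) (hd.1 x)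
    _ = c := by rw [← Finset.sum_mul, hd.2, one_mul]

lemma IsDist.abs_sub_sum_mul_le {X : Type*} [Fintype X] {d : X → ℝ} (hd : IsDist d)
    {f : X → ℝ} {v c : ℝ} (hf : ∀ x, |f x - v| ≤ c) (x₀ : X) :
    |f x₀ - ∑ x, d x * f x| ≤ c + c := by
  have hsplit : f x₀ - ∑ x, d x * f x = (f x₀ - v) - ∑ x, d x * (f x - v) := by
    simp only [mul_sub, Finset.sum_sub_distrib, ← Finset.sum_mul, hd.2]
    ring
  rw [hsplit]
  exact (abs_sub _ _).trans (add_le_add (hf x₀) (hd.abs_sum_mul_le hf))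

lemma isDist_ite_eq {X : Type*} [Fintype X] [DecidableEq X] (x₀ : X) :
    IsDist fun x => if x = x₀ then (1 : ℝ) else 0 :=
  ⟨fun _ => ite_nonneg zero_le_one le_rfl, by simp⟩

lemma abs_le_div_one_sub_of_contraction {ι : Type*} [Finite ι] {D : ι → ℝ} {γ c : ℝ}
    (hγ1 : γ < 1) (h : ∀ M, (∀ j, |D j| ≤ M) → ∀ i, |D i| ≤ γ * M + c) (i : ι) :
    |D i| ≤ c / (1 - γ) := by
  have : Nonempty ι := ⟨i⟩
  have hle : ∀ j, |D j| ≤ ⨆ j, |D j| :=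
    le_ciSup (f := fun j => |D j|) (Finite.bddAbove_range _)
  have hsup : ⨆ j, |D j| ≤ γ * (⨆ j, |D j|) + c := ciSup_le (h _ hle)
  rw [le_div_iff₀ (by linarith)]
  nlinarith [hle i]

section MDP

variable {S A : Type*} [Fintype S] [Fintype A]
  {P : S → A → S → ℝ} {π : S → A → ℝ}

lemma IsKernel.isDist_step (hP : IsKernel P) (hπ : IsPolicy π) (s : S) (a : A) :
    IsDist fun p : S × A => P s a p.1 * π p.1 p.2 := by
  refine ⟨fun p => mul_nonneg ((hP s a).1 p.1) ((hπ p.1).1 p.2), ?_⟩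
  simp only [Fintype.sum_prod_type, ← Finset.mul_sum, (hπ _).2, mul_one, (hP s a).2]

lemma IsKernel.isDist_saDist (hP : IsKernel P) (hπ : IsPolicy π) {d₀ : S × A → ℝ}
    (hd₀ : IsDist d₀) (t : ℕ) : IsDist (saDist P π d₀ t) := by
  induction t with
  | zero => exact hd₀
  | succ t ih =>
    refine ⟨fun q => Finset.sum_nonneg fun p _ =>
      mul_nonneg (mul_nonneg (ih.1 p) ((hP _ _).1 _)) ((hπ _).1 _), ?_⟩
    show ∑ q : S × A, ∑ p : S × A, saDist P π d₀ t p * P p.1 p.2 q.1 * π q.1 q.2 = 1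
    rw [Finset.sum_comm]
    simp only [mul_assoc, ← Finset.mul_sum, (hP.isDist_step hπ _ _).2, mul_one, ih.2]

end MDP

section Return

variable {S A : Type*} [Fintype S] [Fintype A] [DecidableEq S] [DecidableEq A]
  {P : S → A → S → ℝ} {π : S → A → ℝ}

lemma saDist_succ_ite_eq (p : S × A) (t : ℕ) (q : S × A) :
    saDist P π (fun x => if x = p then 1 else 0) (t + 1) q =
      ∑ p' : S × A, P p.1 p.2 p'.1 * π p'.1 p'.2 *
        saDist P π (fun x => if x = p' then 1 else 0) t q := by
  induction t generalizing q with
  | zero => simp [saDist]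
  | succ t ih =>
    show ∑ x : S × A, saDist P π _ (t + 1) x * P x.1 x.2 q.1 * π q.1 q.2 =
      ∑ p' : S × A, P p.1 p.2 p'.1 * π p'.1 p'.2 *
        ∑ x : S × A, saDist P π _ t x * P x.1 x.2 q.1 * π q.1 q.2
    simp only [ih, Finset.sum_mul, Finset.mul_sum]
    rw [Finset.sum_comm]
    exact Finset.sum_congr rfl fun _ _ => Finset.sum_congr rfl fun _ _ => by ring

/-- `Qval P r γ π s a` is by definition `∑' t, γ ^ t * expectedReward P r π (s, a) t`. -/
def expectedReward (P : S → A → S → ℝ) (r : S → A → ℝ) (π : S → A → ℝ) (p : S × A) (t : ℕ) :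
    ℝ :=
  ∑ q : S × A, saDist P π (fun x => if x = p then 1 else 0) t q * r q.1 q.2

variable {r : S → A → ℝ} {γ : ℝ}

lemma expectedReward_zero (p : S × A) : expectedReward P r π p 0 = r p.1 p.2 := by
  simp [expectedReward, saDist]

lemma expectedReward_succ (p : S × A) (t : ℕ) :
    expectedReward P r π p (t + 1) =
      ∑ p' : S × A, P p.1 p.2 p'.1 * π p'.1 p'.2 * expectedReward P r π p' t := by
  simp only [expectedReward, saDist_succ_ite_eq, Finset.sum_mul, Finset.mul_sum]
  rw [Finset.sum_comm]
  exact Finset.sum_congr rfl fun _ _ => Finset.sum_congr rfl fun _ _ => by ring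

lemma IsKernel.summable_expectedReward (hP : IsKernel P) (hπ : IsPolicy π) (hγ0 : 0 ≤ γ)
    (hγ1 : γ < 1) (p : S × A) : Summable fun t => γ ^ t * expectedReward P r π p t := by
  refine .of_norm_bounded ((summable_geometric_of_lt_one hγ0 hγ1).mul_left
    (∑ q : S × A, |r q.1 q.2|)) fun t => ?_
  rw [Real.norm_eq_abs, abs_mul, abs_of_nonneg (pow_nonneg hγ0 t), mul_comm]
  refine mul_le_mul_of_nonneg_right ?_ (pow_nonneg hγ0 t)
  exact (hP.isDist_saDist hπ (isDist_ite_eq p) t).abs_sum_mul_le fun q =>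
    Finset.single_le_sum (f := fun q : S × A => |r q.1 q.2|) (fun _ _ => abs_nonneg _)
      (Finset.mem_univ q)

lemma IsKernel.qval_eq (hP : IsKernel P) (hπ : IsPolicy π) (hγ0 : 0 ≤ γ) (hγ1 : γ < 1)
    (s : S) (a : A) :
    Qval P r γ π s a = r s a + γ * ∑ p : S × A, P s a p.1 * π p.1 p.2 * Qval P r γ π p.1 p.2 := by
  have hsum := hP.summable_expectedReward (r := r) hπ hγ0 hγ1
  change ∑' t, γ ^ t * expectedReward P r π (s, a) t = _
  rw [(hsum (s, a)).tsum_eq_zero_add, pow_zero, one_mul, expectedReward_zero]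
  have hstep : ∀ t, γ ^ (t + 1) * expectedReward P r π (s, a) (t + 1) =
      ∑ p : S × A, γ * (P s a p.1 * π p.1 p.2 * (γ ^ t * expectedReward P r π p t)) := by
    intro t
    rw [expectedReward_succ, Finset.mul_sum]
    exact Finset.sum_congr rfl fun _ _ => by ring
  rw [tsum_congr hstep, Summable.tsum_finsetSum fun p _ => ((hsum p).mul_left _).mul_left γ,
    Finset.mul_sum]
  congr 1
  exact Finset.sum_congr rfl fun p _ => by rw [tsum_mul_left, tsum_mul_left]; rfl

lemma IsKernel.eq_qval_of_bellman (hP : IsKernel P) (hπ : IsPolicy π) (hγ0 : 0 ≤ γ)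
    (hγ1 : γ < 1) {f : S → A → ℝ}
    (hf : ∀ s a, f s a = r s a + γ * ∑ p : S × A, P s a p.1 * π p.1 p.2 * f p.1 p.2)
    (s : S) (a : A) : f s a = Qval P r γ π s a := by
  have hD := abs_le_div_one_sub_of_contraction (c := 0)
    (D := fun p : S × A => f p.1 p.2 - Qval P r γ π p.1 p.2) hγ1 (fun M hM p => ?_) (s, a)
  · rwa [zero_div, abs_nonpos_iff, sub_eq_zero] at hD
  have hdiff : f p.1 p.2 - Qval P r γ π p.1 p.2 = γ * ∑ q : S × A,
      P p.1 p.2 q.1 * π q.1 q.2 * (f q.1 q.2 - Qval P r γ π q.1 q.2) := by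
    rw [hf, hP.qval_eq hπ hγ0 hγ1]
    simp only [mul_sub, Finset.sum_sub_distrib]
    ring
  rw [hdiff, abs_mul, abs_of_nonneg hγ0, add_zero]
  exact mul_le_mul_of_nonneg_left ((hP.isDist_step hπ _ _).abs_sum_mul_le hM) hγ0

lemma IsKernel.abs_qval_sub_qval_le (hP : IsKernel P) (hπ : IsPolicy π) {π' : S → A → ℝ}
    (hπ' : IsPolicy π') (hγ0 : 0 ≤ γ) (hγ1 : γ < 1) {ε : ℝ}
    (hε : ∀ s, |∑ b, (π' s b - π s b) * Qval P r γ π s b| ≤ ε) (s : S) (a : A) :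
    |Qval P r γ π' s a - Qval P r γ π s a| ≤ γ * ε / (1 - γ) := by
  refine abs_le_div_one_sub_of_contraction
    (D := fun p : S × A => Qval P r γ π' p.1 p.2 - Qval P r γ π p.1 p.2) hγ1
    (fun M hM p => ?_) (s, a)
  have hdiff : Qval P r γ π' p.1 p.2 - Qval P r γ π p.1 p.2 = γ *
      (∑ q : S × A, P p.1 p.2 q.1 * π' q.1 q.2 *
          (Qval P r γ π' q.1 q.2 - Qval P r γ π q.1 q.2) +
        ∑ s', P p.1 p.2 s' * ∑ b, (π' s' b - π s' b) * Qval P r γ π s' b) := by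
    rw [hP.qval_eq hπ' hγ0 hγ1, hP.qval_eq hπ hγ0 hγ1, add_sub_add_left_eq_sub, ← mul_sub]
    congr 1
    simp only [Fintype.sum_prod_type, Finset.mul_sum, ← Finset.sum_sub_distrib,
      ← Finset.sum_add_distrib]
    exact Finset.sum_congr rfl fun _ _ => Finset.sum_congr rfl fun _ _ => by ring
  calc |Qval P r γ π' p.1 p.2 - Qval P r γ π p.1 p.2|
      ≤ γ * (M + ε) := by
        rw [hdiff, abs_mul, abs_of_nonneg hγ0]
        exact mul_le_mul_of_nonneg_left ((abs_add_le _ _).trans (add_le_add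
          ((hP.isDist_step hπ' _ _).abs_sum_mul_le hM) ((hP _ _).abs_sum_mul_le hε))) hγ0
    _ = γ * M + γ * ε := mul_add _ _ _

end Return

lemma abs_mul_le_mul_of_le {m B x c : ℝ} (hm : 0 ≤ m) (hmB : m ≤ B) (hx : |x| ≤ c) :
    |m * x| ≤ B * c := by
  rw [abs_mul, abs_of_nonneg hm]
  exact mul_le_mul hmB hx (abs_nonneg x) (hm.trans hmB)

lemma mul_div_tsum_coe_mul_geometric_le {γ Δ N C : ℝ} (hγ0 : 0 ≤ γ) (hγ1 : γ < 1)
    (hΔ : 0 ≤ Δ) (hN : 0 ≤ N) :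
    γ * (Δ / (N * C * ∑' t : ℕ, (t : ℝ) * γ ^ t) * C) / (1 - γ) ≤ Δ / N := by
  rw [tsum_coe_mul_geometric_of_norm_lt_one (by rwa [Real.norm_eq_abs, abs_of_nonneg hγ0])]
  rcases eq_or_ne C 0 with rfl | hC
  · simpa using div_nonneg hΔ hN
  rcases hγ0.eq_or_lt with rfl | hγ
  · simpa using div_nonneg hΔ hN
  rcases hN.eq_or_lt with rfl | hN
  · simp
  have h1γ : 0 < 1 - γ := by linarith
  have hclosed : γ * (Δ / (N * C * (γ / (1 - γ) ^ 2)) * C) / (1 - γ) = Δ / N * (1 - γ) := by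
    field_simp
  rw [hclosed]
  exact mul_le_of_le_one_right (div_nonneg hΔ hN.le) (by linarith)

section Augmented

variable {S A : Type*} [Fintype A]

lemma IsPolicy.lift {π : S → A → ℝ} (hπ : IsPolicy π) : IsPolicy (liftPolicy π) :=
  fun x => hπ x.1

variable [DecidableEq A]

lemma IsPolicy.mixed {πc μ : S → A → ℝ} (hπc : IsPolicy πc)
    (hμ : ∀ s a, μ s a ∈ Set.Icc (0 : ℝ) 1) : IsPolicy (mixed μ πc) := by
  intro x
  obtain ⟨hμ0, hμ1⟩ := hμ x.1 x.2
  refine ⟨fun a => add_nonneg (mul_nonneg hμ0 (ite_nonneg zero_le_one le_rfl))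
    (mul_nonneg (by linarith) ((hπc x.1).1 a)), ?_⟩
  simp [_root_.mixed, Finset.sum_add_distrib, ← Finset.mul_sum, (hπc x.1).2]

lemma sum_mixed_sub_liftPolicy_mul (μ πc : S → A → ℝ) (x : S × A) (f : A → ℝ) :
    ∑ b, (mixed μ πc x b - liftPolicy πc x b) * f b =
      μ x.1 x.2 * (f x.2 - ∑ b, πc x.1 b * f b) := by
  have hterm : ∀ b, (mixed μ πc x b - liftPolicy πc x b) * f b =
      μ x.1 x.2 * ((if b = x.2 then f b else 0) - πc x.1 b * f b) := by
    intro b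
    simp only [mixed, liftPolicy]
    split_ifs <;> ring
  simp [hterm, ← Finset.mul_sum, Finset.sum_sub_distrib]

variable [Fintype S] {P : S → A → S → ℝ}

lemma sum_augP_mul (x : S × A) (a : A) (g : S × A → ℝ) :
    ∑ y : S × A, augP P x a y * g y = ∑ s', P x.1 a s' * g (s', a) := by
  simp [augP, Fintype.sum_prod_type, ite_mul]

lemma IsKernel.aug (hP : IsKernel P) : IsKernel (augP P) := by
  refine fun x a => ⟨fun y => ?_, ?_⟩
  · unfold augP
    split_ifs
    exacts [(hP _ _).1 _, le_rfl]
  · simpa using (sum_augP_mul (P := P) x a fun _ => 1).trans (by simpa using (hP x.1 a).2)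

variable [DecidableEq S] {r : S → A → ℝ} {γ : ℝ}

lemma IsKernel.qval_liftPolicy (hP : IsKernel P) {π : S → A → ℝ} (hπ : IsPolicy π)
    (hγ0 : 0 ≤ γ) (hγ1 : γ < 1) (x : S × A) (a : A) :
    Qval (augP P) (augR r) γ (liftPolicy π) x a = Qval P r γ π x.1 a := by
  refine (hP.aug.eq_qval_of_bellman hπ.lift hγ0 hγ1
    (f := fun x a => Qval P r γ π x.1 a) (fun x a => ?_) x a).symm
  rw [hP.qval_eq hπ hγ0 hγ1, Fintype.sum_prod_type (f := fun p : (S × A) × A => _)]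
  simp only [liftPolicy, mul_assoc, ← Finset.mul_sum]
  rw [sum_augP_mul x a fun y => ∑ b, π y.1 b * Qval P r γ π y.1 b, Fintype.sum_prod_type]
  simp only [← Finset.mul_sum]
  rfl

variable {πc μ : S → A → ℝ} {B C : ℝ}

lemma IsKernel.abs_qval_mixed_sub_qval_liftPolicy_le (hP : IsKernel P) (hπc : IsPolicy πc)
    (hμ : ∀ s a, μ s a ∈ Set.Icc (0 : ℝ) 1) (hμB : ∀ s a, μ s a ≤ B)
    (hC : ∀ s a, |Adv P r γ πc s a| ≤ C) (hγ0 : 0 ≤ γ) (hγ1 : γ < 1) (x : S × A) (a : A) :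
    |Qval (augP P) (augR r) γ (mixed μ πc) x a - Qval (augP P) (augR r) γ (liftPolicy πc) x a|
      ≤ γ * (B * C) / (1 - γ) := by
  refine hP.aug.abs_qval_sub_qval_le hπc.lift (hπc.mixed hμ) hγ0 hγ1 (fun y => ?_) x a
  rw [sum_mixed_sub_liftPolicy_mul]
  simp only [hP.qval_liftPolicy hπc hγ0 hγ1]
  exact abs_mul_le_mul_of_le (hμ y.1 y.2).1 (hμB y.1 y.2) (hC y.1 y.2)

lemma IsKernel.abs_qval_liftPolicy_sub_qval_mixed_le (hP : IsKernel P) (hπc : IsPolicy πc)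
    (hμ : ∀ s a, μ s a ∈ Set.Icc (0 : ℝ) 1) (hμB : ∀ s a, μ s a ≤ B)
    (hC : ∀ x a, |Adv (augP P) (augR r) γ (mixed μ πc) x a| ≤ C) (hγ0 : 0 ≤ γ) (hγ1 : γ < 1)
    (x : S × A) (a : A) :
    |Qval (augP P) (augR r) γ (liftPolicy πc) x a - Qval (augP P) (augR r) γ (mixed μ πc) x a|
      ≤ γ * (B * (C + C)) / (1 - γ) := by
  refine hP.aug.abs_qval_sub_qval_le (hπc.mixed hμ) hπc.lift hγ0 hγ1 (fun y => ?_) x a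
  have hneg : ∀ b, liftPolicy πc y b - mixed μ πc y b = -(mixed μ πc y b - liftPolicy πc y b) :=
    fun b => (neg_sub _ _).symm
  simp only [hneg, neg_mul, Finset.sum_neg_distrib, abs_neg, sum_mixed_sub_liftPolicy_mul]
  exact abs_mul_le_mul_of_le (hμ y.1 y.2).1 (hμB y.1 y.2)
    ((hπc y.1).abs_sub_sum_mul_le (hC y) y.2)

end Augmented

theorem intermediate_policy_improvement_general
    {S A : Type*} [Fintype S] [Fintype A]
    [DecidableEq S] [DecidableEq A]
    (P : S → A → S → ℝ) (hP : IsKernel P)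
    (r : S → A → ℝ) (γ : ℝ) (hγ0 : 0 ≤ γ) (hγ1 : γ < 1)
    (πcOld πcNew : S → A → ℝ) (hπcOld : IsPolicy πcOld) (hπcNew : IsPolicy πcNew)
    (μOld : S → A → ℝ) (hμ01 : ∀ s a, μOld s a ∈ Set.Icc (0 : ℝ) 1)
    (hQ : ∀ s a, Qval P r γ πcOld s a ≤ Qval P r γ πcNew s a)
    (Δ : ℝ)
    (hΔ : Δ = ⨅ p : S × A, (Qval P r γ πcNew p.1 p.2 - Qval P r γ πcOld p.1 p.2))
    (N : ℝ) (hN : 4 ≤ N)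
    (C0 : ℝ)
    (hC0new : ∀ s a, |Adv P r γ πcNew s a| ≤ C0)
    (hC0old : ∀ (x : S × A) (a : A),
      |Adv (augP P) (augR r) γ (mixed μOld πcOld) x a| ≤ C0)
    (hμ : ∀ s a', μOld s a' ≤ Δ / (N * C0 * ∑' t : ℕ, (t : ℝ) * γ ^ t)) :
    ∀ (s : S) (a' a : A),
      (1 - 4 / N) * Δ ≤
        Qval (augP P) (augR r) γ (mixed μOld πcNew) (s, a') a -
          Qval (augP P) (augR r) γ (mixed μOld πcOld) (s, a') a := by
  intro s a' a
  have : Nonempty (S × A) := ⟨(s, a)⟩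
  have hΔ0 : 0 ≤ Δ := hΔ ▸ le_ciInf fun p => sub_nonneg.2 (hQ p.1 p.2)
  have hK := mul_div_tsum_coe_mul_geometric_le (C := C0) hγ0 hγ1 hΔ0 (by linarith : 0 ≤ N)
  have hNew := abs_le.1 <| hP.abs_qval_mixed_sub_qval_liftPolicy_le hπcNew hμ01 hμ hC0new
    hγ0 hγ1 (s, a') a
  have hOld := abs_le.1 <| hP.abs_qval_liftPolicy_sub_qval_mixed_le hπcOld hμ01 hμ hC0old
    hγ0 hγ1 (s, a') a
  have hCore : Δ ≤ Qval P r γ πcNew s a - Qval P r γ πcOld s a :=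
    hΔ ▸ ciInf_le (Finite.bddBelow_range _) (s, a)
  rw [← hP.qval_liftPolicy hπcNew hγ0 hγ1 (s, a') a,
    ← hP.qval_liftPolicy hπcOld hγ0 hγ1 (s, a') a] at hCore
  set B := Δ / (N * C0 * ∑' t : ℕ, (t : ℝ) * γ ^ t)
  have hOld2 : γ * (B * (C0 + C0)) / (1 - γ) = 2 * (γ * (B * C0) / (1 - γ)) := by ring
  have h4 : (1 - 4 / N) * Δ = Δ - 4 * (Δ / N) := by ring
  linarith [div_nonneg hΔ0 (by linarith : (0 : ℝ) ≤ N)]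

/-- **Lemma 1 (Intermediate Policy Improvement).**
Suppose an inner policy improvement step `πcOld → πcNew` guarantees
`Q^{πcNew}(s,a) ≥ Q^{πcOld}(s,a)` for all `(s,a)`, let
`Δ = min_{(s,a)} (Q^{πcNew}(s,a) − Q^{πcOld}(s,a))`, let `N ≥ 4`, and let
`C0` be a uniform upper bound on `|A^{πcNew}(s,a)|` and on
`|A^{πOld}((s,a'),a)|`, where `πOld` is the mixed policy built from `μOld`
and `πcOld` and `πMid` the mixed policy built from `μOld` and `πcNew`.
If `μOld(s,a') ≤ Δ / (N · C0 · Σ_{t=0}^∞ t γ^t)` for all `(s,a')`, then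
`Q^{πMid}(s,a',a) − Q^{πOld}(s,a',a) ≥ (1 − 4/N)·Δ` for all `(s,a',a)`. -/
theorem intermediate_policy_improvement
    {S A : Type*} [Fintype S] [Fintype A] [Nonempty S] [Nonempty A]
    [DecidableEq S] [DecidableEq A]
    (P : S → A → S → ℝ) (hP : IsKernel P)
    (r : S → A → ℝ) (γ : ℝ) (hγ0 : 0 ≤ γ) (hγ1 : γ < 1)
    (πcOld πcNew : S → A → ℝ) (hπcOld : IsPolicy πcOld) (hπcNew : IsPolicy πcNew)
    (μOld : S → A → ℝ) (hμ01 : ∀ s a, μOld s a ∈ Set.Icc (0 : ℝ) 1)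
    (hQ : ∀ s a, Qval P r γ πcOld s a ≤ Qval P r γ πcNew s a)
    (Δ : ℝ)
    (hΔ : Δ = ⨅ p : S × A, (Qval P r γ πcNew p.1 p.2 - Qval P r γ πcOld p.1 p.2))
    (N : ℝ) (hN : 4 ≤ N)
    (C0 : ℝ)
    (hC0new : ∀ s a, |Adv P r γ πcNew s a| ≤ C0)
    (hC0old : ∀ (x : S × A) (a : A),
      |Adv (augP P) (augR r) γ (mixed μOld πcOld) x a| ≤ C0)
    (hμ : ∀ s a', μOld s a' ≤ Δ / (N * C0 * ∑' t : ℕ, (t : ℝ) * γ ^ t)) :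
    ∀ (s : S) (a' a : A),
      (1 - 4 / N) * Δ ≤
        Qval (augP P) (augR r) γ (mixed μOld πcNew) (s, a') a -
          Qval (augP P) (augR r) γ (mixed μOld πcOld) (s, a') a :=
  intermediate_policy_improvement_general P hP r γ hγ0 hγ1 πcOld πcNew hπcOld hπcNew μOld hμ01 hQ Δ
    hΔ N hN C0 hC0new hC0old hμ

end
end

section
/- (Performance difference lemma.) For any two stationary policies π and π' on a finite Markov decision process with discount factor γ ∈ [0,1), the difference of their returns satisfies J(π') − J(π) = E_{τ ~ π'}[ Σ_{t=0}^∞ γ^t A^π(s_t,a_t) ], where the expectation is over trajectories generated by π' from the initial distribution ρ_0. -/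
open scoped BigOperators

noncomputable section

section PDLHelpers

variable {S A : Type*} [Fintype S] [Fintype A] [DecidableEq S] [DecidableEq A]

lemma IsDist.le_one' {X : Type*} [Fintype X] {d : X → ℝ} (hd : IsDist d) (x : X) :
    d x ≤ 1 := by
  rw [← hd.2]
  exact Finset.single_le_sum (fun i _ => hd.1 i) (Finset.mem_univ x)

/-- One-step pushforward of a state-action distribution. -/
def stepD (P : S → A → S → ℝ) (π : S → A → ℝ) (d0 : S × A → ℝ) : S × A → ℝ :=
  fun q => ∑ p : S × A, d0 p * P p.1 p.2 q.1 * π q.1 q.2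

lemma saDist_succ (P : S → A → S → ℝ) (π : S → A → ℝ) (d0 : S × A → ℝ) :
    ∀ t, saDist P π d0 (t + 1) = saDist P π (stepD P π d0) t := by
  intro t
  induction t with
  | zero => rfl
  | succ t ih =>
    funext q
    show ∑ p : S × A, saDist P π d0 (t + 1) p * P p.1 p.2 q.1 * π q.1 q.2 = _
    rw [ih]; rfl

lemma saDist_isDist {P : S → A → S → ℝ} (hP : IsKernel P)
    {π : S → A → ℝ} (hπ : IsPolicy π) {d0 : S × A → ℝ} (hd0 : IsDist d0) :
    ∀ t, IsDist (saDist P π d0 t) := by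
  intro t
  induction t with
  | zero => exact hd0
  | succ t ih =>
    constructor
    · intro q
      exact Finset.sum_nonneg fun p _ =>
        mul_nonneg (mul_nonneg (ih.1 p) ((hP p.1 p.2).1 q.1)) ((hπ q.1).1 q.2)
    · show ∑ q : S × A, ∑ p : S × A,
          saDist P π d0 t p * P p.1 p.2 q.1 * π q.1 q.2 = 1
      rw [Fintype.sum_prod_type]
      have h1 : ∀ s' : S, ∑ a' : A, ∑ p : S × A,
          saDist P π d0 t p * P p.1 p.2 s' * π s' a'
          = ∑ p : S × A, saDist P π d0 t p * P p.1 p.2 s' := by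
        intro s'
        rw [Finset.sum_comm]
        refine Finset.sum_congr rfl fun p _ => ?_
        rw [← Finset.mul_sum, (hπ s').2, mul_one]
      simp only [h1]
      rw [Finset.sum_comm]
      have h2 : ∀ p : S × A, ∑ s' : S, saDist P π d0 t p * P p.1 p.2 s'
          = saDist P π d0 t p := by
        intro p
        rw [← Finset.mul_sum, (hP p.1 p.2).2, mul_one]
      simp only [h2]
      exact ih.2

lemma expectation_abs_le {d : S × A → ℝ} (hd : IsDist d) (r : S → A → ℝ) :
    |∑ q : S × A, d q * r q.1 q.2| ≤ ∑ q : S × A, |r q.1 q.2| :=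
  (Finset.abs_sum_le_sum_abs _ _).trans (Finset.sum_le_sum fun q _ => by
    rw [abs_mul, abs_of_nonneg (hd.1 q)]
    exact mul_le_of_le_one_left (abs_nonneg _) (hd.le_one' q))

lemma summable_geom_mul {γ : ℝ} (hγ0 : 0 ≤ γ) (hγ1 : γ < 1) {c : ℕ → ℝ} {R : ℝ}
    (hc : ∀ t, |c t| ≤ R) : Summable fun t => γ ^ t * c t := by
  apply Summable.of_abs
  refine Summable.of_nonneg_of_le (fun t => abs_nonneg _) (fun t => ?_)
    ((summable_geometric_of_lt_one hγ0 hγ1).mul_right R)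
  rw [abs_mul, abs_of_nonneg (pow_nonneg hγ0 t)]
  exact mul_le_mul_of_nonneg_left (hc t) (pow_nonneg hγ0 t)

lemma delta_isDist (p0 : S × A) : IsDist (fun p : S × A => if p = p0 then 1 else 0) := by
  constructor
  · intro p; dsimp only; split <;> norm_num
  · simp

lemma saDist_linear (P : S → A → S → ℝ) (π : S → A → ℝ) (d0 : S × A → ℝ) :
    ∀ t q, saDist P π d0 t q =
      ∑ p : S × A, d0 p * saDist P π (fun p' => if p' = p then 1 else 0) t q := by
  intro t
  induction t with
  | zero =>
    intro q
    simp [saDist, Finset.sum_ite_eq, eq_comm]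
  | succ t ih =>
    intro q
    show ∑ p' : S × A, saDist P π d0 t p' * P p'.1 p'.2 q.1 * π q.1 q.2 = _
    calc ∑ p' : S × A, saDist P π d0 t p' * P p'.1 p'.2 q.1 * π q.1 q.2
        = ∑ p' : S × A, ∑ p : S × A,
            d0 p * (saDist P π (fun x => if x = p then 1 else 0) t p'
              * P p'.1 p'.2 q.1 * π q.1 q.2) := by
          refine Finset.sum_congr rfl fun p' _ => ?_
          rw [ih p', Finset.sum_mul, Finset.sum_mul]
          exact Finset.sum_congr rfl fun p _ => by ring
      _ = ∑ p : S × A, d0 p * ∑ p' : S × A,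
            saDist P π (fun x => if x = p then 1 else 0) t p'
              * P p'.1 p'.2 q.1 * π q.1 q.2 := by
          rw [Finset.sum_comm]
          exact Finset.sum_congr rfl fun p _ => by rw [Finset.mul_sum]
      _ = _ := rfl

lemma stepD_delta (P : S → A → S → ℝ) (π : S → A → ℝ) (s : S) (a : A) :
    stepD P π (fun p => if p = (s, a) then 1 else 0)
      = fun q : S × A => P s a q.1 * π q.1 q.2 := by
  funext q
  simp [stepD, ite_mul, Finset.sum_ite_eq']


lemma summable_Q {P : S → A → S → ℝ} (hP : IsKernel P)
    {π : S → A → ℝ} (hπ : IsPolicy π) {d0 : S × A → ℝ} (hd0 : IsDist d0)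
    (r : S → A → ℝ) {γ : ℝ} (hγ0 : 0 ≤ γ) (hγ1 : γ < 1) :
    Summable fun t : ℕ => γ ^ t * ∑ q : S × A, saDist P π d0 t q * r q.1 q.2 :=
  summable_geom_mul hγ0 hγ1
    (fun t => expectation_abs_le (saDist_isDist hP hπ hd0 t) r)

lemma tsum_saDist_eq {P : S → A → S → ℝ} (hP : IsKernel P)
    {π : S → A → ℝ} (hπ : IsPolicy π) (d0 : S × A → ℝ)
    (r : S → A → ℝ) {γ : ℝ} (hγ0 : 0 ≤ γ) (hγ1 : γ < 1) :
    ∑' t : ℕ, γ ^ t * ∑ q : S × A, saDist P π d0 t q * r q.1 q.2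
      = ∑ p : S × A, d0 p * Qval P r γ π p.1 p.2 := by
  have h1 : ∀ t : ℕ, γ ^ t * ∑ q : S × A, saDist P π d0 t q * r q.1 q.2
      = ∑ p : S × A, d0 p * (γ ^ t * ∑ q : S × A,
          saDist P π (fun x => if x = p then 1 else 0) t q * r q.1 q.2) := by
    intro t
    have h2 : ∑ q : S × A, saDist P π d0 t q * r q.1 q.2
        = ∑ p : S × A, d0 p * ∑ q : S × A,
            saDist P π (fun x => if x = p then 1 else 0) t q * r q.1 q.2 := by
      calc ∑ q : S × A, saDist P π d0 t q * r q.1 q.2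
          = ∑ q : S × A, ∑ p : S × A,
              d0 p * (saDist P π (fun x => if x = p then 1 else 0) t q * r q.1 q.2) := by
            refine Finset.sum_congr rfl fun q _ => ?_
            rw [saDist_linear P π d0 t q, Finset.sum_mul]
            exact Finset.sum_congr rfl fun p _ => by ring
        _ = _ := by
            rw [Finset.sum_comm]
            exact Finset.sum_congr rfl fun p _ => by rw [Finset.mul_sum]
    rw [h2, Finset.mul_sum]
    exact Finset.sum_congr rfl fun p _ => by ring
  rw [tsum_congr h1, Summable.tsum_finsetSum (fun p _ =>
    (summable_Q hP hπ (delta_isDist p) r hγ0 hγ1).mul_left (d0 p))]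
  refine Finset.sum_congr rfl fun p _ => ?_
  rw [tsum_mul_left, Qval]

lemma bellman {P : S → A → S → ℝ} (hP : IsKernel P)
    {π : S → A → ℝ} (hπ : IsPolicy π)
    (r : S → A → ℝ) {γ : ℝ} (hγ0 : 0 ≤ γ) (hγ1 : γ < 1) (s : S) (a : A) :
    Qval P r γ π s a = r s a + γ * ∑ s' : S, P s a s' * Vval P r γ π s' := by
  have hsum := summable_Q hP hπ (delta_isDist (s, a)) r hγ0 hγ1
  rw [Qval, Summable.tsum_eq_zero_add hsum]
  congr 1
  · simp [saDist, Finset.sum_ite_eq']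
  · have h1 : ∀ t : ℕ, γ ^ (t + 1) * ∑ q : S × A,
        saDist P π (fun p => if p = (s, a) then 1 else 0) (t + 1) q * r q.1 q.2
        = γ * (γ ^ t * ∑ q : S × A,
            saDist P π (stepD P π (fun p => if p = (s, a) then 1 else 0)) t q * r q.1 q.2) := by
      intro t
      rw [saDist_succ, pow_succ]
      ring
    rw [tsum_congr h1, tsum_mul_left,
      tsum_saDist_eq hP hπ _ r hγ0 hγ1]
    congr 1
    rw [stepD_delta, Fintype.sum_prod_type]
    refine Finset.sum_congr rfl fun s' _ => ?_
    rw [Vval, Finset.mul_sum]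
    exact Finset.sum_congr rfl fun a' _ => by ring

end PDLHelpers


/-- **Performance difference lemma.**
For any two stationary policies `π` and `π'` on a finite MDP with discount
factor `γ ∈ [0,1)`, the difference of their returns satisfies
`J(π') − J(π) = E_{τ ~ π'}[ Σ_{t=0}^∞ γ^t A^π(s_t,a_t) ]`, the expectation
being over trajectories generated by `π'` from the initial distribution `ρ0`. -/
theorem performance_difference_lemma
    {S A : Type*} [Fintype S] [Fintype A] [Nonempty S] [Nonempty A]
    [DecidableEq S] [DecidableEq A]
    (P : S → A → S → ℝ) (hP : IsKernel P)
    (r : S → A → ℝ) (γ : ℝ) (hγ0 : 0 ≤ γ) (hγ1 : γ < 1)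
    (ρ0 : S → ℝ) (hρ0 : IsDist ρ0)
    (π π' : S → A → ℝ) (hπ : IsPolicy π) (hπ' : IsPolicy π') :
    (∑ s : S, ρ0 s * Vval P r γ π' s) - (∑ s : S, ρ0 s * Vval P r γ π s) =
      ∑' t : ℕ, γ ^ t * ∑ q : S × A,
        saDist P π' (fun p => ρ0 p.1 * π' p.1 p.2) t q * Adv P r γ π q.1 q.2 := by
  set d0 : S × A → ℝ := fun p => ρ0 p.1 * π' p.1 p.2 with hd0def
  have hd0 : IsDist d0 := by
    constructor
    · intro p; exact mul_nonneg (hρ0.1 p.1) ((hπ' p.1).1 p.2)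
    · show ∑ p : S × A, ρ0 p.1 * π' p.1 p.2 = 1
      rw [Fintype.sum_prod_type]
      have h : ∀ s : S, ∑ a : A, ρ0 s * π' s a = ρ0 s := fun s => by
        rw [← Finset.mul_sum, (hπ' s).2, mul_one]
      simp only [h]
      exact hρ0.2
  set D : ℕ → S × A → ℝ := saDist P π' d0 with hDdef
  have hD : ∀ t, IsDist (D t) := saDist_isDist hP hπ' hd0
  set f : ℕ → ℝ := fun t => γ ^ t * ∑ q : S × A, D t q * Vval P r γ π q.1 with hfdef
  set aa : ℕ → ℝ := fun t => γ ^ t * ∑ q : S × A, D t q * r q.1 q.2 with haadef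
  have hnext : ∀ t : ℕ, ∑ q : S × A, D (t + 1) q * Vval P r γ π q.1
      = ∑ p : S × A, D t p * ∑ s' : S, P p.1 p.2 s' * Vval P r γ π s' := by
    intro t
    have hD1 : ∀ q : S × A, D (t + 1) q
        = ∑ p : S × A, D t p * P p.1 p.2 q.1 * π' q.1 q.2 := fun q => rfl
    simp only [hD1]
    rw [Fintype.sum_prod_type]
    have h1 : ∀ s' : S, ∑ a' : A,
        (∑ p : S × A, D t p * P p.1 p.2 s' * π' s' a') * Vval P r γ π s'
        = ∑ p : S × A, D t p * (P p.1 p.2 s' * Vval P r γ π s') := by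
      intro s'
      calc ∑ a' : A, (∑ p : S × A, D t p * P p.1 p.2 s' * π' s' a') * Vval P r γ π s'
          = ∑ a' : A, ∑ p : S × A,
              π' s' a' * (D t p * (P p.1 p.2 s' * Vval P r γ π s')) := by
            refine Finset.sum_congr rfl fun a' _ => ?_
            rw [Finset.sum_mul]
            exact Finset.sum_congr rfl fun p _ => by ring
        _ = ∑ p : S × A, (∑ a' : A, π' s' a')
              * (D t p * (P p.1 p.2 s' * Vval P r γ π s')) := by
            rw [Finset.sum_comm]
            exact Finset.sum_congr rfl fun p _ => by rw [← Finset.sum_mul]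
        _ = _ := by simp only [(hπ' s').2, one_mul]
    simp only [h1]
    rw [Finset.sum_comm]
    exact Finset.sum_congr rfl fun p _ => by rw [Finset.mul_sum]
  have key : ∀ t : ℕ, γ ^ t * ∑ q : S × A, D t q * Adv P r γ π q.1 q.2
      = aa t + (f (t + 1) - f t) := by
    intro t
    have hQ : ∑ q : S × A, D t q * Qval P r γ π q.1 q.2
        = (∑ q : S × A, D t q * r q.1 q.2)
          + γ * ∑ q : S × A, D (t + 1) q * Vval P r γ π q.1 := by
      rw [hnext t]
      calc ∑ q : S × A, D t q * Qval P r γ π q.1 q.2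
          = ∑ q : S × A, (D t q * r q.1 q.2
              + γ * (D t q * ∑ s' : S, P q.1 q.2 s' * Vval P r γ π s')) := by
            refine Finset.sum_congr rfl fun q _ => ?_
            rw [bellman hP hπ r hγ0 hγ1 q.1 q.2]
            ring
        _ = _ := by rw [Finset.sum_add_distrib, ← Finset.mul_sum]
    calc γ ^ t * ∑ q : S × A, D t q * Adv P r γ π q.1 q.2
        = γ ^ t * ((∑ q : S × A, D t q * Qval P r γ π q.1 q.2)
            - ∑ q : S × A, D t q * Vval P r γ π q.1) := by
          congr 1
          rw [← Finset.sum_sub_distrib]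
          exact Finset.sum_congr rfl fun q _ => by rw [Adv]; ring
      _ = γ ^ t * ∑ q : S × A, D t q * r q.1 q.2
            + γ ^ (t + 1) * ∑ q : S × A, D (t + 1) q * Vval P r γ π q.1
            - γ ^ t * ∑ q : S × A, D t q * Vval P r γ π q.1 := by
          rw [hQ, pow_succ]; ring
      _ = aa t + (f (t + 1) - f t) := by
          simp only [haadef, hfdef]; ring
  have hsaa : Summable aa :=
    summable_geom_mul hγ0 hγ1 (fun t => expectation_abs_le (hD t) r)
  have hsf : Summable f :=
    summable_geom_mul hγ0 hγ1
      (fun t => expectation_abs_le (hD t) (fun s _ => Vval P r γ π s))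
  have hsf1 : Summable fun t => f (t + 1) := (summable_nat_add_iff 1).2 hsf
  have hdiff : Summable fun t => f (t + 1) - f t := hsf1.sub hsf
  have hlim : Filter.Tendsto f Filter.atTop (nhds 0) := by
    have hb : ∀ t : ℕ, ‖f t‖ ≤ (∑ q : S × A, |Vval P r γ π q.1|) * γ ^ t := by
      intro t
      rw [hfdef]
      rw [Real.norm_eq_abs, abs_mul, abs_of_nonneg (pow_nonneg hγ0 t), mul_comm]
      exact mul_le_mul_of_nonneg_right
        (expectation_abs_le (hD t) (fun s _ => Vval P r γ π s)) (pow_nonneg hγ0 t)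
    have hg : Filter.Tendsto
        (fun t : ℕ => (∑ q : S × A, |Vval P r γ π q.1|) * γ ^ t)
        Filter.atTop (nhds 0) := by
      have h := tendsto_pow_atTop_nhds_zero_of_lt_one hγ0 hγ1
      simpa using h.const_mul (∑ q : S × A, |Vval P r γ π q.1|)
    exact squeeze_zero_norm hb hg
  have htel : ∑' t : ℕ, (f (t + 1) - f t) = - f 0 := by
    refine HasSum.tsum_eq ?_
    rw [hdiff.hasSum_iff_tendsto_nat]
    have h : (fun n => ∑ i ∈ Finset.range n, (f (i + 1) - f i))
        = fun n => f n - f 0 := by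
      funext n; exact Finset.sum_range_sub f n
    rw [h]
    simpa using hlim.sub_const (f 0)
  have h1 : ∑' t : ℕ, aa t = ∑ s : S, ρ0 s * Vval P r γ π' s := by
    rw [show (fun t : ℕ => aa t) = aa from rfl, haadef]
    simp only [hDdef]
    rw [tsum_saDist_eq hP hπ' d0 r hγ0 hγ1]
    rw [Fintype.sum_prod_type]
    refine Finset.sum_congr rfl fun s _ => ?_
    rw [Vval, Finset.mul_sum]
    exact Finset.sum_congr rfl fun a _ => by show ρ0 s * π' s a * _ = _; ring
  have h3 : f 0 = ∑ s : S, ρ0 s * Vval P r γ π s := by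
    rw [hfdef]
    show γ ^ 0 * ∑ q : S × A, d0 q * Vval P r γ π q.1 = _
    rw [pow_zero, one_mul, Fintype.sum_prod_type]
    refine Finset.sum_congr rfl fun s _ => ?_
    have : ∑ a : A, ρ0 s * π' s a * Vval P r γ π s
        = (∑ a : A, π' s a) * (ρ0 s * Vval P r γ π s) := by
      rw [Finset.sum_mul]
      exact Finset.sum_congr rfl fun a _ => by ring
    show ∑ a : A, ρ0 s * π' s a * Vval P r γ π s = _
    rw [this, (hπ' s).2, one_mul]
  rw [tsum_congr key, Summable.tsum_add hsaa hdiff, h1, htel, h3]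
  ring

end
end

section
/- Let π and π' be two stationary policies on a finite Markov decision process such that for every state s the total variation distance between the action distributions π'(·|s) and π(·|s) is at most ε, i.e. (1/2) Σ_{a∈A} |π'(a|s) − π(a|s)| ≤ ε. Then for every time step t and every state s, the time-t state marginals induced by the two policies from a common initial distribution satisfy |p_{π'}(s_t = s) − p_π(s_t = s)| ≤ 2εt. -/
open scoped BigOperators

noncomputable section

/-- The time-`t` state marginal of the trajectory distribution induced by
policy `π` from the initial state distribution `ρ0`. -/
def stateDist {S A : Type*} [Fintype S] [Fintype A]
    (P : S → A → S → ℝ) (π : S → A → ℝ) (ρ0 : S → ℝ) : ℕ → S → ℝ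
  | 0 => ρ0
  | t + 1 => fun s' => ∑ s : S, ∑ a : A, stateDist P π ρ0 t s * π s a * P s a s'

lemma stateDist_isDist {S A : Type*} [Fintype S] [Fintype A]
    (P : S → A → S → ℝ) (hP : IsKernel P)
    (ρ0 : S → ℝ) (hρ0 : IsDist ρ0)
    (π : S → A → ℝ) (hπ : IsPolicy π) :
    ∀ t, IsDist (stateDist P π ρ0 t) := by
  intro t
  induction t with
  | zero => exact hρ0
  | succ t ih =>
    constructor
    · intro s'
      apply Finset.sum_nonneg; intro s _
      apply Finset.sum_nonneg; intro a _
      have h1 := ih.1 s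
      have h2 := (hπ s).1 a
      have h3 := (hP s a).1 s'
      positivity
    · show ∑ s' : S, ∑ s : S, ∑ a : A,
        stateDist P π ρ0 t s * π s a * P s a s' = 1
      rw [Finset.sum_comm]
      have : ∀ s : S, ∑ s' : S, ∑ a : A,
          stateDist P π ρ0 t s * π s a * P s a s' = stateDist P π ρ0 t s := by
        intro s
        rw [Finset.sum_comm]
        calc ∑ a : A, ∑ s' : S, stateDist P π ρ0 t s * π s a * P s a s'
            = ∑ a : A, stateDist P π ρ0 t s * π s a * ∑ s' : S, P s a s' := by
              refine Finset.sum_congr rfl fun a _ => ?_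
              rw [Finset.mul_sum]
          _ = ∑ a : A, stateDist P π ρ0 t s * π s a := by
              refine Finset.sum_congr rfl fun a _ => ?_
              rw [(hP s a).2, mul_one]
          _ = stateDist P π ρ0 t s := by
              rw [← Finset.mul_sum, (hπ s).2, mul_one]
      simp_rw [this]
      exact ih.2

lemma state_marginal_L1 {S A : Type*} [Fintype S] [Fintype A] [Nonempty S]
    (P : S → A → S → ℝ) (hP : IsKernel P)
    (ρ0 : S → ℝ) (hρ0 : IsDist ρ0)
    (π π' : S → A → ℝ) (hπ : IsPolicy π) (hπ' : IsPolicy π')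
    (ε : ℝ)
    (hε : ∀ s, (1 / 2) * ∑ a : A, |π' s a - π s a| ≤ ε) :
    ∀ t : ℕ, ∑ s : S, |stateDist P π' ρ0 t s - stateDist P π ρ0 t s| ≤ 2 * ε * t := by
  intro t
  induction t with
  | zero => simp [stateDist]
  | succ t ih =>
    have hd := stateDist_isDist P hP ρ0 hρ0 π hπ t
    have hd' := stateDist_isDist P hP ρ0 hρ0 π' hπ' t
    set d := stateDist P π ρ0 t with hdd
    set d' := stateDist P π' ρ0 t with hdd'
    have key : ∑ s' : S, |stateDist P π' ρ0 (t+1) s' - stateDist P π ρ0 (t+1) s'|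
        ≤ ∑ s : S, ∑ a : A, |d' s * π' s a - d s * π s a| := by
      have step1 : ∀ s' : S,
          |stateDist P π' ρ0 (t+1) s' - stateDist P π ρ0 (t+1) s'|
          ≤ ∑ s : S, ∑ a : A, |d' s * π' s a - d s * π s a| * P s a s' := by
        intro s'
        show |(∑ s : S, ∑ a : A, d' s * π' s a * P s a s') -
              (∑ s : S, ∑ a : A, d s * π s a * P s a s')| ≤ _
        rw [← Finset.sum_sub_distrib]
        refine le_trans (Finset.abs_sum_le_sum_abs _ _) ?_
        refine Finset.sum_le_sum fun s _ => ?_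
        rw [← Finset.sum_sub_distrib]
        refine le_trans (Finset.abs_sum_le_sum_abs _ _) ?_
        refine Finset.sum_le_sum fun a _ => ?_
        rw [← sub_mul, abs_mul, abs_of_nonneg ((hP s a).1 s')]
      calc ∑ s' : S, |stateDist P π' ρ0 (t+1) s' - stateDist P π ρ0 (t+1) s'|
          ≤ ∑ s' : S, ∑ s : S, ∑ a : A, |d' s * π' s a - d s * π s a| * P s a s' :=
            Finset.sum_le_sum fun s' _ => step1 s'
        _ = ∑ s : S, ∑ a : A, |d' s * π' s a - d s * π s a| := by
            rw [Finset.sum_comm]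
            refine Finset.sum_congr rfl fun s _ => ?_
            rw [Finset.sum_comm]
            refine Finset.sum_congr rfl fun a _ => ?_
            rw [← Finset.mul_sum, (hP s a).2, mul_one]
    have split : ∑ s : S, ∑ a : A, |d' s * π' s a - d s * π s a|
        ≤ ∑ s : S, (|d' s - d s| + d s * ∑ a : A, |π' s a - π s a|) := by
      refine Finset.sum_le_sum fun s _ => ?_
      have : ∀ a : A, |d' s * π' s a - d s * π s a|
          ≤ |d' s - d s| * π' s a + d s * |π' s a - π s a| := by
        intro a
        have : d' s * π' s a - d s * π s a
            = (d' s - d s) * π' s a + d s * (π' s a - π s a) := by ring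
        rw [this]
        refine le_trans (abs_add_le _ _) ?_
        rw [abs_mul, abs_mul, abs_of_nonneg ((hπ' s).1 a), abs_of_nonneg (hd.1 s)]
      refine le_trans (Finset.sum_le_sum fun a _ => this a) ?_
      rw [Finset.sum_add_distrib, ← Finset.mul_sum, (hπ' s).2, mul_one,
        ← Finset.mul_sum]
    have hsum1 : ∑ s : S, |d' s - d s| ≤ 2 * ε * t := ih
    have hsum2 : ∑ s : S, d s * ∑ a : A, |π' s a - π s a| ≤ 2 * ε := by
      have : ∀ s : S, d s * ∑ a : A, |π' s a - π s a| ≤ d s * (2 * ε) := by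
        intro s
        refine mul_le_mul_of_nonneg_left ?_ (hd.1 s)
        have := hε s
        linarith
      refine le_trans (Finset.sum_le_sum fun s _ => this s) ?_
      rw [← Finset.sum_mul, hd.2, one_mul]
    calc ∑ s' : S, |stateDist P π' ρ0 (t+1) s' - stateDist P π ρ0 (t+1) s'|
        ≤ ∑ s : S, (|d' s - d s| + d s * ∑ a : A, |π' s a - π s a|) :=
          le_trans key split
      _ = (∑ s : S, |d' s - d s|) + ∑ s : S, d s * ∑ a : A, |π' s a - π s a| :=
          Finset.sum_add_distrib
      _ ≤ 2 * ε * t + 2 * ε := add_le_add hsum1 hsum2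
      _ = 2 * ε * (t + 1) := by ring
      _ = 2 * ε * ((t : ℕ) + 1 : ℕ) := by push_cast; ring

/-- **Lemma (closeness of state marginals).**
If for every state `s` the total variation distance between the action
distributions `π'(·|s)` and `π(·|s)` is at most `ε`, then for every time step
`t` and every state `s`, the time-`t` state marginals induced by the two
policies from a common initial distribution satisfy
`|p_{π'}(s_t = s) − p_π(s_t = s)| ≤ 2εt`. -/
theorem state_marginal_closeness
    {S A : Type*} [Fintype S] [Fintype A] [Nonempty S] [Nonempty A]
    (P : S → A → S → ℝ) (hP : IsKernel P)
    (ρ0 : S → ℝ) (hρ0 : IsDist ρ0)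
    (π π' : S → A → ℝ) (hπ : IsPolicy π) (hπ' : IsPolicy π')
    (ε : ℝ)
    (hε : ∀ s, (1 / 2) * ∑ a : A, |π' s a - π s a| ≤ ε) :
    ∀ (t : ℕ) (s : S),
      |stateDist P π' ρ0 t s - stateDist P π ρ0 t s| ≤ 2 * ε * t := by
  intro t s
  have h := state_marginal_L1 P hP ρ0 hρ0 π π' hπ hπ' ε hε t
  exact le_trans (Finset.single_le_sum
    (f := fun s => |stateDist P π' ρ0 t s - stateDist P π ρ0 t s|)
    (fun i _ => abs_nonneg _) (Finset.mem_univ s)) h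

end
end

section
/- Let π and π' be two stationary policies on a finite Markov decision process such that for every state s the total variation distance between the action distributions π'(·|s) and π(·|s) is at most ε. Then for every bounded function f : S → ℝ and every time step t, E_{s ~ p_{π'}(s_t)}[f(s)] ≥ E_{s ~ p_π(s_t)}[f(s)] − 2εt · max_{s∈S} |f(s)|, where p_π(s_t) denotes the time-t state marginal induced by π from a common initial distribution. -/
open scoped BigOperators

noncomputable section

/-!
The state-action marginals `p(s) π(a|s)` of the two policies at time `t` differ in `ℓ¹` by
at most `2ε` plus the `ℓ¹` distance of the state marginals, and one transition step `P` is
an `ℓ¹` contraction. Hence the `ℓ¹` distance of the state marginals grows by at most `2ε`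
per step, and pairing the difference with `f` costs at most `max |f|` per unit of `ℓ¹`
distance.
-/

open Finset

theorem sum_abs_sum_mul_le_of_stochastic {X Y : Type*} [Fintype X] [Fintype Y]
    (K : X → Y → ℝ) (hK : ∀ x, IsDist (K x)) (g : X → ℝ) :
    ∑ y, |∑ x, g x * K x y| ≤ ∑ x, |g x| :=
  calc ∑ y, |∑ x, g x * K x y|
      ≤ ∑ y, ∑ x, |g x| * K x y := sum_le_sum fun y _ =>
        (abs_sum_le_sum_abs _ _).trans_eq <| sum_congr rfl fun x _ => by
          rw [abs_mul, abs_of_nonneg ((hK x).1 y)]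
    _ = ∑ x, |g x| := by
      rw [sum_comm]
      exact sum_congr rfl fun x _ => by rw [← mul_sum, (hK x).2, mul_one]

theorem sum_abs_mul_sub_mul_le {S A : Type*} [Fintype S] [Fintype A]
    (d d' : S → ℝ) (hd' : ∀ s, 0 ≤ d' s) (π π' : S → A → ℝ) (hπ : IsPolicy π) :
    ∑ p : S × A, |d' p.1 * π' p.1 p.2 - d p.1 * π p.1 p.2| ≤
      ∑ s, d' s * ∑ a, |π' s a - π s a| + ∑ s, |d' s - d s| := by
  rw [Fintype.sum_prod_type, ← sum_add_distrib]
  refine sum_le_sum fun s _ => ?_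
  calc ∑ a, |d' s * π' s a - d s * π s a|
      ≤ ∑ a, (d' s * |π' s a - π s a| + |d' s - d s| * π s a) :=
        sum_le_sum fun a _ => by
        have hsplit : d' s * π' s a - d s * π s a
            = d' s * (π' s a - π s a) + (d' s - d s) * π s a := by ring
        rw [hsplit]
        refine (abs_add_le _ _).trans_eq ?_
        rw [abs_mul, abs_mul, abs_of_nonneg (hd' s), abs_of_nonneg ((hπ s).1 a)]
    _ = d' s * ∑ a, |π' s a - π s a| + |d' s - d s| := by
      rw [sum_add_distrib, ← mul_sum, ← mul_sum, (hπ s).2, mul_one]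

theorem sub_sum_mul_le_sum_abs_sub_mul_iSup {S : Type*} [Fintype S] (d d' f : S → ℝ) :
    ∑ s, d s * f s - ∑ s, d' s * f s ≤ (∑ s, |d' s - d s|) * ⨆ s, |f s| := by
  rw [← sum_sub_distrib, sum_mul]
  refine sum_le_sum fun s _ => ?_
  calc d s * f s - d' s * f s
      ≤ |d' s - d s| * |f s| := by
        rw [abs_sub_comm, ← abs_mul, sub_mul]; exact le_abs_self _
    _ ≤ |d' s - d s| * ⨆ s, |f s| := mul_le_mul_of_nonneg_left
        (le_ciSup (f := fun s => |f s|) (Finite.bddAbove_range _) s) (abs_nonneg _)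

section stateDist

variable {S A : Type*} [Fintype S] [Fintype A] {P : S → A → S → ℝ} {ρ0 : S → ℝ}

theorem isDist_stateDist (hP : IsKernel P) (hρ0 : IsDist ρ0) {π : S → A → ℝ}
    (hπ : IsPolicy π) (t : ℕ) : IsDist (stateDist P π ρ0 t) := by
  induction t with
  | zero => exact hρ0
  | succ t ih =>
    refine ⟨fun s' => sum_nonneg fun s _ => sum_nonneg fun a _ =>
      mul_nonneg (mul_nonneg (ih.1 s) ((hπ s).1 a)) ((hP s a).1 s'), ?_⟩
    calc ∑ s', ∑ s, ∑ a, stateDist P π ρ0 t s * π s a * P s a s'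
        = ∑ s, ∑ a, stateDist P π ρ0 t s * π s a * ∑ s', P s a s' := by
          rw [sum_comm]
          exact sum_congr rfl fun s _ => by rw [sum_comm]; simp only [mul_sum]
      _ = 1 := by simp only [(hP _ _).2, mul_one, ← mul_sum, (hπ _).2, ih.2]

theorem sum_abs_stateDist_succ_sub_le (hP : IsKernel P) (π π' : S → A → ℝ) (t : ℕ) :
    ∑ s', |stateDist P π' ρ0 (t + 1) s' - stateDist P π ρ0 (t + 1) s'| ≤
      ∑ p : S × A,
        |stateDist P π' ρ0 t p.1 * π' p.1 p.2 - stateDist P π ρ0 t p.1 * π p.1 p.2| := by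
  have hstep : ∀ s', stateDist P π' ρ0 (t + 1) s' - stateDist P π ρ0 (t + 1) s' =
      ∑ p : S × A,
        (stateDist P π' ρ0 t p.1 * π' p.1 p.2 - stateDist P π ρ0 t p.1 * π p.1 p.2) *
          P p.1 p.2 s' := fun s' => by
    simp only [stateDist, Fintype.sum_prod_type, ← sum_sub_distrib, sub_mul]
  simp only [hstep]
  exact sum_abs_sum_mul_le_of_stochastic (fun (p : S × A) s' => P p.1 p.2 s')
    (fun p => hP p.1 p.2) _

theorem sum_abs_stateDist_sub_le (hP : IsKernel P) (hρ0 : IsDist ρ0) {π π' : S → A → ℝ}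
    (hπ : IsPolicy π) (hπ' : IsPolicy π') {ε : ℝ}
    (hε : ∀ s, (1 / 2) * ∑ a, |π' s a - π s a| ≤ ε) (t : ℕ) :
    ∑ s, |stateDist P π' ρ0 t s - stateDist P π ρ0 t s| ≤ 2 * ε * t := by
  induction t with
  | zero => simp [stateDist]
  | succ t ih =>
    have hd' := isDist_stateDist hP hρ0 hπ' t
    calc ∑ s, |stateDist P π' ρ0 (t + 1) s - stateDist P π ρ0 (t + 1) s|
        ≤ ∑ s, stateDist P π' ρ0 t s * ∑ a, |π' s a - π s a| +
            ∑ s, |stateDist P π' ρ0 t s - stateDist P π ρ0 t s| :=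
          (sum_abs_stateDist_succ_sub_le hP π π' t).trans
            (sum_abs_mul_sub_mul_le _ _ hd'.1 π π' hπ)
      _ ≤ ∑ s, stateDist P π' ρ0 t s * (2 * ε) + 2 * ε * t := by
          gcongr with s _
          · exact hd'.1 s
          · linarith [hε s]
      _ = 2 * ε * (t + 1 : ℕ) := by rw [← sum_mul, hd'.2]; push_cast; ring

end stateDist

theorem state_marginal_expectation_bound_general
    {S A : Type*} [Fintype S] [Fintype A]
    (P : S → A → S → ℝ) (hP : IsKernel P)
    (ρ0 : S → ℝ) (hρ0 : IsDist ρ0)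
    (π π' : S → A → ℝ) (hπ : IsPolicy π) (hπ' : IsPolicy π')
    (ε : ℝ)
    (hε : ∀ s, (1 / 2) * ∑ a : A, |π' s a - π s a| ≤ ε)
    (f : S → ℝ) :
    ∀ t : ℕ,
      (∑ s : S, stateDist P π ρ0 t s * f s) - 2 * ε * t * (⨆ s : S, |f s|) ≤
        ∑ s : S, stateDist P π' ρ0 t s * f s := by
  intro t
  have hM : 0 ≤ ⨆ s, |f s| := Real.iSup_nonneg fun s => abs_nonneg (f s)
  have hgap := (sub_sum_mul_le_sum_abs_sub_mul_iSup
    (stateDist P π ρ0 t) (stateDist P π' ρ0 t) f).trans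
    (mul_le_mul_of_nonneg_right (sum_abs_stateDist_sub_le hP hρ0 hπ hπ' hε t) hM)
  linarith

/-- **Lemma (closeness of expectations under the state marginals).**
If for every state `s` the total variation distance between the action
distributions `π'(·|s)` and `π(·|s)` is at most `ε`, then for every (bounded)
function `f : S → ℝ` and every time step `t`,
`E_{s ~ p_{π'}(s_t)}[f(s)] ≥ E_{s ~ p_π(s_t)}[f(s)] − 2εt·max_{s}|f(s)|`. -/
theorem state_marginal_expectation_bound
    {S A : Type*} [Fintype S] [Fintype A] [Nonempty S] [Nonempty A]
    (P : S → A → S → ℝ) (hP : IsKernel P)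
    (ρ0 : S → ℝ) (hρ0 : IsDist ρ0)
    (π π' : S → A → ℝ) (hπ : IsPolicy π) (hπ' : IsPolicy π')
    (ε : ℝ)
    (hε : ∀ s, (1 / 2) * ∑ a : A, |π' s a - π s a| ≤ ε)
    (f : S → ℝ) :
    ∀ t : ℕ,
      (∑ s : S, stateDist P π ρ0 t s * f s) - 2 * ε * t * (⨆ s : S, |f s|) ≤
        ∑ s : S, stateDist P π' ρ0 t s * f s :=
  state_marginal_expectation_bound_general P hP ρ0 hρ0 π π' hπ hπ' ε hε f

end
end

section
/- Let π^core be a policy core and μ : S × A → [0,1] a policy inertia controller such that μ(s,a') = 0 whenever the advantage A^{π^core}(s,a') is negative. Then the corresponding mixed policy π(·|s,a') = μ(s,a')·δ_{a'} + (1−μ(s,a'))·π^core(·|s) satisfies, for every state s and previous action a', E_{a ~ π(·|s,a')}[Q^{π^core}(s,a)] ≥ V^{π^core}(s). -/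
open scoped BigOperators

noncomputable section

/-- **Lemma (one-step improvement of the mixed policy).**
Let `πc` be a policy core and `μ : S × A → [0,1]` a policy inertia controller
with `μ(s,a') = 0` whenever the advantage `A^{πc}(s,a')` is negative. Then the
corresponding mixed policy `π(·|s,a') = μ(s,a')·δ_{a'} + (1−μ(s,a'))·πc(·|s)`
satisfies, for every state `s` and previous action `a'`,
`E_{a ~ π(·|s,a')}[Q^{πc}(s,a)] ≥ V^{πc}(s)`. -/
theorem mixed_one_step_improvement
    {S A : Type*} [Fintype S] [Fintype A] [Nonempty S] [Nonempty A]
    [DecidableEq S] [DecidableEq A]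
    (P : S → A → S → ℝ) (hP : IsKernel P)
    (r : S → A → ℝ) (γ : ℝ) (hγ0 : 0 ≤ γ) (hγ1 : γ < 1)
    (πc : S → A → ℝ) (hπc : IsPolicy πc)
    (μ : S → A → ℝ) (hμ01 : ∀ s a, μ s a ∈ Set.Icc (0 : ℝ) 1)
    (hμ0 : ∀ s a', Adv P r γ πc s a' < 0 → μ s a' = 0) :
    ∀ (s : S) (a' : A),
      Vval P r γ πc s ≤ ∑ a : A, mixed μ πc (s, a') a * Qval P r γ πc s a := by
  intro s a'
  have hsum : ∑ a : A, mixed μ πc (s, a') a * Qval P r γ πc s a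
      = μ s a' * Qval P r γ πc s a' + (1 - μ s a') * Vval P r γ πc s := by
    simp only [mixed, Vval, Finset.mul_sum]
    rw [Finset.sum_congr rfl (fun a _ => add_mul _ _ _), Finset.sum_add_distrib]
    congr 1
    · rw [Finset.sum_eq_single a'] <;> simp +contextual [mul_comm]
    · apply Finset.sum_congr rfl; intro a _; ring
  rw [hsum]
  have key : 0 ≤ μ s a' * Adv P r γ πc s a' := by
    rcases lt_or_ge (Adv P r γ πc s a') 0 with h | h
    · simp [hμ0 s a' h]
    · exact mul_nonneg (hμ01 s a').1 h
  have : μ s a' * Adv P r γ πc s a'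
      = μ s a' * Qval P r γ πc s a' + (1 - μ s a') * Vval P r γ πc s
        - Vval P r γ πc s := by
    simp [Adv]; ring
  linarith [key, this]

end
end

section
/- Let π^core_new be a policy core and π_mid the mixed policy built from π^core_new and a policy inertia controller μ : S × A → [0,1]. Then for every triple (s,a',a), the gap between the Q-function of the mixed policy on the augmented MDP and the Q-function of the policy core equals the expected discounted sum of the policy core's advantages along trajectories of the mixed policy: Q^{π_mid}(s,a',a) − Q^{π^core_new}(s,a) = γ · E_{s_1 ~ P(·|s,a)} E_{τ ~ π_mid, (s_1,a)}[ Σ_{t=0}^∞ γ^t A^{π^core_new}(s_t,a_t) ], where the inner expectation is over trajectories of the mixed policy started from the augmented state (s_1, a). -/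
open scoped BigOperators

noncomputable section

section Aux
set_option linter.unusedSectionVars false

variable {S A : Type*} [Fintype S] [Fintype A] [DecidableEq S] [DecidableEq A]

/-- Dirac distribution on a pair. -/
def PDLdelta (x : S × A) : S × A → ℝ := fun p => if p = x then 1 else 0

/-- One-step pushforward of an initial distribution. -/
def PDLstep (P : S → A → S → ℝ) (π : S × A → A → ℝ) (d0 : S × A → ℝ) : S × A → ℝ :=
  fun q => ∑ p : S × A, d0 p * P p.1 p.2 q.1 * π q q.2

/-- Discounted expected value of `f` along the trajectory distribution. -/
def PDLG (P : S → A → S → ℝ) (π : S → A → ℝ) (γ : ℝ) (d0 f : S × A → ℝ) : ℝ :=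
  ∑' t : ℕ, γ ^ t * ∑ q : S × A, saDist P π d0 t q * f q

variable (P : S → A → S → ℝ) (π : S → A → ℝ) (γ : ℝ)

lemma saDist_succ_s11 (d0 : S × A → ℝ) (t : ℕ) (q : S × A) :
    saDist P π d0 (t + 1) q
      = ∑ p : S × A, saDist P π d0 t p * P p.1 p.2 q.1 * π q.1 q.2 := rfl

lemma saDist_nonneg (hP : IsKernel P) (hπ : IsPolicy π) (d0 : S × A → ℝ)
    (hd0 : ∀ q, 0 ≤ d0 q) : ∀ t q, 0 ≤ saDist P π d0 t q := by
  intro t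
  induction t with
  | zero => exact hd0
  | succ t ih =>
    intro q
    exact Finset.sum_nonneg fun p _ =>
      mul_nonneg (mul_nonneg (ih p) ((hP _ _).1 _)) ((hπ _).1 _)

lemma saDist_mass (hP : IsKernel P) (hπ : IsPolicy π) (d0 : S × A → ℝ) :
    ∀ t, ∑ q, saDist P π d0 t q = ∑ q, d0 q := by
  intro t
  induction t with
  | zero => rfl
  | succ t ih =>
    have : ∑ q : S × A, saDist P π d0 (t + 1) q
        = ∑ p : S × A, saDist P π d0 t p *
            ∑ q : S × A, P p.1 p.2 q.1 * π q.1 q.2 := by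
      simp only [saDist_succ_s11]
      rw [Finset.sum_comm]
      simp [Finset.mul_sum, mul_assoc]
    rw [this]
    have h1 : ∀ p : S × A, ∑ q : S × A, P p.1 p.2 q.1 * π q.1 q.2 = 1 := by
      intro p
      rw [Fintype.sum_prod_type]
      simp [← Finset.mul_sum, (hπ _).2, (hP _ _).2]
    simp only [h1, mul_one]
    exact ih

lemma saDist_kernel (d0 : S × A → ℝ) :
    ∀ t q, saDist P π d0 t q = ∑ x : S × A, d0 x * saDist P π (PDLdelta x) t q := by
  intro t
  induction t with
  | zero =>
    intro q
    simp [saDist, PDLdelta, eq_comm, mul_ite]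
  | succ t ih =>
    intro q
    simp only [saDist_succ_s11]
    calc ∑ p : S × A, saDist P π d0 t p * P p.1 p.2 q.1 * π q.1 q.2
        = ∑ p : S × A, (∑ x : S × A, d0 x * saDist P π (PDLdelta x) t p)
            * P p.1 p.2 q.1 * π q.1 q.2 := by
          refine Finset.sum_congr rfl fun p _ => ?_; rw [ih p]
      _ = ∑ p : S × A, ∑ x : S × A,
            d0 x * (saDist P π (PDLdelta x) t p * P p.1 p.2 q.1 * π q.1 q.2) := by
          refine Finset.sum_congr rfl fun p _ => ?_
          rw [Finset.sum_mul, Finset.sum_mul]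
          exact Finset.sum_congr rfl fun x _ => by ring
      _ = ∑ x : S × A, ∑ p : S × A,
            d0 x * (saDist P π (PDLdelta x) t p * P p.1 p.2 q.1 * π q.1 q.2) :=
          Finset.sum_comm
      _ = ∑ x : S × A, d0 x *
            ∑ p : S × A, saDist P π (PDLdelta x) t p * P p.1 p.2 q.1 * π q.1 q.2 := by
          simp [Finset.mul_sum]

lemma saDist_shift (d0 : S × A → ℝ) :
    ∀ t, saDist P π d0 (t + 1)
      = saDist P π (fun q => ∑ p : S × A, d0 p * P p.1 p.2 q.1 * π q.1 q.2) t := by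
  intro t
  induction t with
  | zero => rfl
  | succ t ih =>
    funext q
    rw [saDist_succ_s11, ih]
    rfl


lemma PDLdelta_mass (x : S × A) : ∑ p : S × A, PDLdelta x p = 1 := by
  simp [PDLdelta]

lemma exp_abs_le (hP : IsKernel P) (hπ : IsPolicy π) (d0 f : S × A → ℝ)
    (hd0 : ∀ q, 0 ≤ d0 q) (t : ℕ) :
    |∑ q : S × A, saDist P π d0 t q * f q| ≤ (∑ q, d0 q) * ∑ q, |f q| := by
  calc |∑ q : S × A, saDist P π d0 t q * f q|
      ≤ ∑ q : S × A, |saDist P π d0 t q * f q| := Finset.abs_sum_le_sum_abs _ _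
    _ = ∑ q : S × A, saDist P π d0 t q * |f q| := by
        refine Finset.sum_congr rfl fun q _ => ?_
        rw [abs_mul, abs_of_nonneg (saDist_nonneg P π hP hπ d0 hd0 t q)]
    _ ≤ ∑ q : S × A, (∑ p : S × A, saDist P π d0 t p) * |f q| := by
        refine Finset.sum_le_sum fun q _ => ?_
        exact mul_le_mul_of_nonneg_right
          (Finset.single_le_sum (fun p _ => saDist_nonneg P π hP hπ d0 hd0 t p)
            (Finset.mem_univ q)) (abs_nonneg _)
    _ = (∑ q, d0 q) * ∑ q, |f q| := by
        rw [← Finset.mul_sum, saDist_mass P π hP hπ d0 t]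

lemma summable_G (hP : IsKernel P) (hπ : IsPolicy π)
    (hγ0 : 0 ≤ γ) (hγ1 : γ < 1) (d0 f : S × A → ℝ) :
    Summable (fun t : ℕ => γ ^ t * ∑ q : S × A, saDist P π d0 t q * f q) := by
  set C : ℝ := (∑ x : S × A, |d0 x|) * ∑ q : S × A, |f q| with hC
  have key : ∀ t : ℕ, |γ ^ t * ∑ q : S × A, saDist P π d0 t q * f q| ≤ C * γ ^ t := by
    intro t
    rw [abs_mul, abs_of_nonneg (pow_nonneg hγ0 t), mul_comm]
    refine mul_le_mul_of_nonneg_right ?_ (pow_nonneg hγ0 t)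
    have h1 : ∑ q : S × A, saDist P π d0 t q * f q
        = ∑ x : S × A, d0 x * ∑ q : S × A, saDist P π (PDLdelta x) t q * f q := by
      calc ∑ q : S × A, saDist P π d0 t q * f q
          = ∑ q : S × A, ∑ x : S × A, d0 x * (saDist P π (PDLdelta x) t q * f q) := by
            refine Finset.sum_congr rfl fun q _ => ?_
            rw [saDist_kernel P π d0 t q, Finset.sum_mul]
            exact Finset.sum_congr rfl fun x _ => by ring
        _ = ∑ x : S × A, ∑ q : S × A, d0 x * (saDist P π (PDLdelta x) t q * f q) :=
            Finset.sum_comm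
        _ = _ := by simp [Finset.mul_sum]
    rw [h1]
    calc |∑ x : S × A, d0 x * ∑ q : S × A, saDist P π (PDLdelta x) t q * f q|
        ≤ ∑ x : S × A, |d0 x * ∑ q : S × A, saDist P π (PDLdelta x) t q * f q| :=
          Finset.abs_sum_le_sum_abs _ _
      _ ≤ ∑ x : S × A, |d0 x| * ∑ q : S × A, |f q| := by
          refine Finset.sum_le_sum fun x _ => ?_
          rw [abs_mul]
          refine mul_le_mul_of_nonneg_left ?_ (abs_nonneg _)
          have := exp_abs_le P π hP hπ (PDLdelta x) f
            (fun q => by simp [PDLdelta]; split <;> norm_num) t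
          rwa [PDLdelta_mass, one_mul] at this
      _ = C := by rw [hC, Finset.sum_mul]
  have hgeo : Summable (fun t : ℕ => C * γ ^ t) :=
    (summable_geometric_of_lt_one hγ0 hγ1).mul_left C
  exact Summable.of_abs (hgeo.of_nonneg_of_le (fun t => abs_nonneg _) key)

lemma PDLG_step (hP : IsKernel P) (hπ : IsPolicy π)
    (hγ0 : 0 ≤ γ) (hγ1 : γ < 1) (d0 f : S × A → ℝ) :
    PDLG P π γ d0 f = (∑ q : S × A, d0 q * f q)
      + γ * PDLG P π γ (fun q => ∑ p : S × A, d0 p * P p.1 p.2 q.1 * π q.1 q.2) f := by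
  unfold PDLG
  rw [Summable.tsum_eq_zero_add (summable_G P π γ hP hπ hγ0 hγ1 d0 f)]
  congr 1
  · simp [saDist]
  · rw [← tsum_mul_left]
    refine tsum_congr fun t => ?_
    rw [saDist_shift P π d0 t]
    ring

lemma PDLG_linear (hP : IsKernel P) (hπ : IsPolicy π)
    (hγ0 : 0 ≤ γ) (hγ1 : γ < 1) (d0 f : S × A → ℝ) :
    PDLG P π γ d0 f = ∑ x : S × A, d0 x * PDLG P π γ (PDLdelta x) f := by
  unfold PDLG
  have h1 : ∀ t : ℕ, γ ^ t * ∑ q : S × A, saDist P π d0 t q * f q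
      = ∑ x : S × A, d0 x * (γ ^ t * ∑ q : S × A, saDist P π (PDLdelta x) t q * f q) := by
    intro t
    calc γ ^ t * ∑ q : S × A, saDist P π d0 t q * f q
        = γ ^ t * ∑ q : S × A, ∑ x : S × A, d0 x * (saDist P π (PDLdelta x) t q * f q) := by
          congr 1
          refine Finset.sum_congr rfl fun q _ => ?_
          rw [saDist_kernel P π d0 t q, Finset.sum_mul]
          exact Finset.sum_congr rfl fun x _ => by ring
      _ = γ ^ t * ∑ x : S × A, ∑ q : S × A, d0 x * (saDist P π (PDLdelta x) t q * f q) := by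
          rw [Finset.sum_comm]
      _ = _ := by
          rw [Finset.mul_sum]
          refine Finset.sum_congr rfl fun x _ => ?_
          rw [Finset.mul_sum]
          ring_nf
          rw [Finset.mul_sum]
          refine Finset.sum_congr rfl fun q _ => by ring
  rw [tsum_congr h1, Summable.tsum_finsetSum]
  · exact Finset.sum_congr rfl fun x _ => tsum_mul_left
  · intro x _
    exact (summable_G P π γ hP hπ hγ0 hγ1 (PDLdelta x) f).mul_left (d0 x)

lemma tsum_telescope_aux (u : ℕ → ℝ) (hs : Summable (fun t => u (t + 1) - u t))
    (h0 : Filter.Tendsto u Filter.atTop (nhds 0)) :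
    ∑' t : ℕ, (u (t + 1) - u t) = -u 0 := by
  have h := hs.hasSum.tendsto_sum_nat
  have heq : (fun n => ∑ i ∈ Finset.range n, (u (i + 1) - u i)) = fun n => u n - u 0 := by
    funext n; exact Finset.sum_range_sub u n
  rw [heq] at h
  have h2 : Filter.Tendsto (fun n => u n - u 0) Filter.atTop (nhds (0 - u 0)) :=
    h0.sub_const (u 0)
  rw [zero_sub] at h2
  exact tendsto_nhds_unique h h2

lemma PDLG_telescope (hP : IsKernel P) (hπ : IsPolicy π)
    (hγ0 : 0 ≤ γ) (hγ1 : γ < 1) (d0 g r' : S × A → ℝ) (W : S → ℝ)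
    (hd0 : ∀ q, 0 ≤ d0 q)
    (hrel : ∀ q : S × A, g q = r' q + γ * (∑ s' : S, P q.1 q.2 s' * W s') - W q.1) :
    PDLG P π γ d0 g = PDLG P π γ d0 r' - ∑ q : S × A, d0 q * W q.1 := by
  set u : ℕ → ℝ := fun t => γ ^ t * ∑ q : S × A, saDist P π d0 t q * W q.1 with hu
  have key1 : ∀ t : ℕ, ∑ q : S × A, saDist P π d0 (t + 1) q * W q.1
      = ∑ p : S × A, saDist P π d0 t p * ∑ s' : S, P p.1 p.2 s' * W s' := by
    intro t
    calc ∑ q : S × A, saDist P π d0 (t + 1) q * W q.1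
        = ∑ q : S × A, ∑ p : S × A,
            saDist P π d0 t p * (P p.1 p.2 q.1 * π q.1 q.2 * W q.1) := by
          refine Finset.sum_congr rfl fun q _ => ?_
          rw [saDist_succ_s11, Finset.sum_mul]
          exact Finset.sum_congr rfl fun p _ => by ring
      _ = ∑ p : S × A, ∑ q : S × A,
            saDist P π d0 t p * (P p.1 p.2 q.1 * π q.1 q.2 * W q.1) := Finset.sum_comm
      _ = _ := by
          refine Finset.sum_congr rfl fun p _ => ?_
          rw [← Finset.mul_sum, Fintype.sum_prod_type]
          congr 1
          refine Finset.sum_congr rfl fun s' _ => ?_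
          have h2 : ∑ a2 : A, P p.1 p.2 s' * π s' a2 * W s'
              = P p.1 p.2 s' * W s' * ∑ a2 : A, π s' a2 := by
            rw [Finset.mul_sum]
            exact Finset.sum_congr rfl fun a2 _ => by ring
          simpa [(hπ s').2] using h2
  have key2 : ∀ t : ℕ, γ ^ t * ∑ q : S × A, saDist P π d0 t q * g q
      = γ ^ t * (∑ q : S × A, saDist P π d0 t q * r' q) + (u (t + 1) - u t) := by
    intro t
    have hsplit : ∑ q : S × A, saDist P π d0 t q * g q
        = (∑ q : S × A, saDist P π d0 t q * r' q)
          + γ * (∑ q : S × A, saDist P π d0 t q * (∑ s' : S, P q.1 q.2 s' * W s'))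
          - ∑ q : S × A, saDist P π d0 t q * W q.1 := by
      rw [Finset.mul_sum, ← Finset.sum_add_distrib, ← Finset.sum_sub_distrib]
      refine Finset.sum_congr rfl fun q _ => ?_
      rw [hrel q]; ring
    have hu1 : u (t + 1)
        = γ ^ (t + 1) * ∑ p : S × A, saDist P π d0 t p * ∑ s' : S, P p.1 p.2 s' * W s' := by
      simp only [hu]
      rw [key1 t]
    rw [hsplit, hu1]
    simp only [hu]
    ring
  have Sr : Summable (fun t : ℕ => γ ^ t * ∑ q : S × A, saDist P π d0 t q * r' q) :=
    summable_G P π γ hP hπ hγ0 hγ1 d0 r'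
  have Su : Summable u := by
    rw [hu]; exact summable_G P π γ hP hπ hγ0 hγ1 d0 (fun q => W q.1)
  have Su1 : Summable (fun t => u (t + 1)) := (summable_nat_add_iff 1).2 Su
  have Ssub : Summable (fun t => u (t + 1) - u t) := Su1.sub Su
  have hlim : Filter.Tendsto u Filter.atTop (nhds 0) := by
    have hb : ∀ t : ℕ, ‖u t‖ ≤ ((∑ q : S × A, d0 q) * ∑ q : S × A, |W q.1|) * γ ^ t := by
      intro t
      simp only [hu, Real.norm_eq_abs, abs_mul, abs_of_nonneg (pow_nonneg hγ0 t)]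
      rw [mul_comm (γ ^ t)]
      exact mul_le_mul_of_nonneg_right
        (exp_abs_le P π hP hπ d0 (fun q => W q.1) hd0 t) (pow_nonneg hγ0 t)
    have hgeo : Filter.Tendsto
        (fun t : ℕ => ((∑ q : S × A, d0 q) * ∑ q : S × A, |W q.1|) * γ ^ t)
        Filter.atTop (nhds 0) := by
      simpa using (tendsto_pow_atTop_nhds_zero_of_lt_one hγ0 hγ1).const_mul
        ((∑ q : S × A, d0 q) * ∑ q : S × A, |W q.1|)
    exact squeeze_zero_norm hb hgeo
  calc PDLG P π γ d0 g
      = ∑' t : ℕ, (γ ^ t * (∑ q : S × A, saDist P π d0 t q * r' q) + (u (t + 1) - u t)) :=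
        tsum_congr key2
    _ = (∑' t : ℕ, γ ^ t * ∑ q : S × A, saDist P π d0 t q * r' q)
          + ∑' t : ℕ, (u (t + 1) - u t) := Summable.tsum_add Sr Ssub
    _ = PDLG P π γ d0 r' + (-u 0) := by rw [tsum_telescope_aux u Ssub hlim]; rfl
    _ = _ := by
        simp only [hu, pow_zero, one_mul]
        have : ∑ q : S × A, saDist P π d0 0 q * W q.1 = ∑ q : S × A, d0 q * W q.1 := rfl
        rw [this]; ring

lemma PDL_bellman (hP : IsKernel P) (hπ : IsPolicy π)
    (hγ0 : 0 ≤ γ) (hγ1 : γ < 1) (r : S → A → ℝ) (s : S) (a : A) :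
    Qval P r γ π s a = r s a + γ * ∑ s' : S, P s a s' * Vval P r γ π s' := by
  have h0 : Qval P r γ π s a = PDLG P π γ (PDLdelta (s, a)) (fun q => r q.1 q.2) := rfl
  rw [h0, PDLG_step P π γ hP hπ hγ0 hγ1]
  congr 1
  · simp [PDLdelta]
  · congr 1
    have hstep : (fun q : S × A => ∑ p : S × A, PDLdelta (s, a) p * P p.1 p.2 q.1 * π q.1 q.2)
        = fun q : S × A => P s a q.1 * π q.1 q.2 := by
      funext q
      simp [PDLdelta, ite_mul]
    rw [hstep, PDLG_linear P π γ hP hπ hγ0 hγ1]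
    rw [Fintype.sum_prod_type]
    refine Finset.sum_congr rfl fun s' _ => ?_
    rw [Vval, Finset.mul_sum]
    refine Finset.sum_congr rfl fun a2 _ => ?_
    have h2 : PDLG P π γ (PDLdelta (s', a2)) (fun q => r q.1 q.2) = Qval P r γ π s' a2 := rfl
    rw [h2]
    ring

end Aux

lemma mixed_isPolicy {S A : Type*} [Fintype S] [Fintype A] [DecidableEq A]
    (μ : S → A → ℝ) (πc : S → A → ℝ)
    (hμ : ∀ s a, μ s a ∈ Set.Icc (0 : ℝ) 1) (hπc : IsPolicy πc) :
    IsPolicy (mixed μ πc) := by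
  intro x
  constructor
  · intro a
    have h1 := (hμ x.1 x.2).1
    have h2 := (hμ x.1 x.2).2
    apply add_nonneg
    · apply mul_nonneg h1
      split <;> norm_num
    · exact mul_nonneg (by linarith) ((hπc x.1).1 a)
  · simp [mixed, Finset.sum_add_distrib, ← Finset.mul_sum, (hπc x.1).2]

lemma augP_isKernel {S A : Type*} [Fintype S] [Fintype A] [DecidableEq A]
    (P : S → A → S → ℝ) (hP : IsKernel P) : IsKernel (augP P) := by
  intro x a
  constructor
  · intro y
    unfold augP
    split
    · exact (hP _ _).1 _
    · exact le_refl 0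
  · simp [augP, Fintype.sum_prod_type, (hP _ _).2]


/-- **Lemma (gap between the mixed policy's and the policy core's
Q-functions).** Let `πcNew` be a policy core and `πMid` the mixed policy built
from `πcNew` and a policy inertia controller `μ : S × A → [0,1]`. Then for
every triple `(s,a',a)`,
`Q^{πMid}(s,a',a) − Q^{πcNew}(s,a)
   = γ · E_{s₁ ~ P(·|s,a)} E_{τ ~ πMid, (s₁,a)}[Σ_{t=0}^∞ γ^t A^{πcNew}(s_t,a_t)]`,
where the inner expectation is over trajectories of the mixed policy started
from the augmented state `(s₁, a)`. -/
theorem mixed_core_q_gap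
    {S A : Type*} [Fintype S] [Fintype A] [Nonempty S] [Nonempty A]
    [DecidableEq S] [DecidableEq A]
    (P : S → A → S → ℝ) (hP : IsKernel P)
    (r : S → A → ℝ) (γ : ℝ) (hγ0 : 0 ≤ γ) (hγ1 : γ < 1)
    (πcNew : S → A → ℝ) (hπc : IsPolicy πcNew)
    (μ : S → A → ℝ) (hμ01 : ∀ s a, μ s a ∈ Set.Icc (0 : ℝ) 1) :
    ∀ (s : S) (a' a : A),
      Qval (augP P) (augR r) γ (mixed μ πcNew) (s, a') a - Qval P r γ πcNew s a =
        γ * ∑ s1 : S, P s a s1 *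
          ∑' t : ℕ, γ ^ t * ∑ q : (S × A) × A,
            saDist (augP P) (mixed μ πcNew)
              (fun p => if p.1 = (s1, a) then mixed μ πcNew (s1, a) p.2 else 0) t q *
              Adv P r γ πcNew q.1.1 q.2 := by
  intro s a' a
  set π' : S × A → A → ℝ := mixed μ πcNew with hπ'def
  have hπ' : IsPolicy π' := mixed_isPolicy μ πcNew hμ01 hπc
  have hP' : IsKernel (augP P) := augP_isKernel P hP
  set f' : (S × A) × A → ℝ := fun q => r q.1.1 q.2 with hf'
  set g : (S × A) × A → ℝ := fun q => Adv P r γ πcNew q.1.1 q.2 with hg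
  set W : S × A → ℝ := fun x => Vval P r γ πcNew x.1 with hW
  set d1 : S → ((S × A) × A → ℝ) :=
    fun s1 => fun p => if p.1 = (s1, a) then π' (s1, a) p.2 else 0 with hd1
  -- the inner tsum in the statement is PDLG of (d1 s1) and g
  have hinner : ∀ s1 : S,
      (∑' t : ℕ, γ ^ t * ∑ q : (S × A) × A,
        saDist (augP P) π' (d1 s1) t q * Adv P r γ πcNew q.1.1 q.2)
      = PDLG (augP P) π' γ (d1 s1) g := fun _ => rfl
  -- Bellman relation lifted to the augmented MDP
  have hrel : ∀ q : (S × A) × A,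
      g q = f' q + γ * (∑ y : S × A, augP P q.1 q.2 y * W y) - W q.1 := by
    intro q
    have h1 : ∑ y : S × A, augP P q.1 q.2 y * W y
        = ∑ s' : S, P q.1.1 q.2 s' * Vval P r γ πcNew s' := by
      simp [augP, hW, Fintype.sum_prod_type, ite_mul]
    simp only [hg, hW, hf', Adv]
    rw [h1, PDL_bellman P πcNew γ hP hπc hγ0 hγ1 r q.1.1 q.2]
  have hd1nn : ∀ s1 : S, ∀ p : (S × A) × A, 0 ≤ d1 s1 p := by
    intro s1 p
    rw [hd1]
    dsimp only
    split
    · exact (hπ' (s1, a)).1 p.2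
    · exact le_refl 0
  -- telescoping applied on the augmented MDP
  have htel : ∀ s1 : S, PDLG (augP P) π' γ (d1 s1) g
      = PDLG (augP P) π' γ (d1 s1) f' - ∑ q : (S × A) × A, d1 s1 q * W q.1 :=
    fun s1 => PDLG_telescope (augP P) π' γ hP' hπ' hγ0 hγ1 (d1 s1) g f' W (hd1nn s1) hrel
  -- value of the initial mass term
  have hmassV : ∀ s1 : S, ∑ q : (S × A) × A, d1 s1 q * W q.1 = Vval P r γ πcNew s1 := by
    intro s1
    rw [Fintype.sum_prod_type]
    have h3 : ∀ x : S × A,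
        ∑ a2 : A, d1 s1 (x, a2) * W x = (if x = (s1, a) then Vval P r γ πcNew s1 else 0) := by
      intro x
      by_cases h : x = (s1, a)
      · simp [hd1, hW, h, ← Finset.sum_mul, (hπ' (s1, a)).2]
      · simp [hd1, h]
    simp [h3]
  -- the one-step distribution from the initial augmented state
  set D0 : (S × A) × A → ℝ := fun q => augP P (s, a') a q.1 * π' q.1 q.2 with hD0def
  have hD0 : ∀ x : (S × A) × A, D0 x = ∑ s1 : S, P s a s1 * d1 s1 x := by
    intro x
    rcases x with ⟨⟨x1, x2⟩, x3⟩
    by_cases h : x2 = a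
    · subst h
      simp [hD0def, hd1, augP, Prod.ext_iff, mul_ite, mul_zero, eq_comm]
    · have hne : ∀ s1 : S, ¬((x1, x2) = (s1, a)) := by
        intro s1 hc
        exact h (congrArg Prod.snd hc)
      simp [hD0def, hd1, augP, h, hne]
  -- linearity: the P-mixture of the d1 s1 trajectories is the D0 trajectory
  have hlin : ∑ s1 : S, P s a s1 * PDLG (augP P) π' γ (d1 s1) f'
      = PDLG (augP P) π' γ D0 f' := by
    have h4 : ∀ s1 : S, PDLG (augP P) π' γ (d1 s1) f'
        = ∑ x : (S × A) × A, d1 s1 x * PDLG (augP P) π' γ (PDLdelta x) f' :=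
      fun s1 => PDLG_linear (augP P) π' γ hP' hπ' hγ0 hγ1 (d1 s1) f'
    rw [PDLG_linear (augP P) π' γ hP' hπ' hγ0 hγ1 D0 f']
    calc ∑ s1 : S, P s a s1 * PDLG (augP P) π' γ (d1 s1) f'
        = ∑ s1 : S, ∑ x : (S × A) × A,
            P s a s1 * (d1 s1 x * PDLG (augP P) π' γ (PDLdelta x) f') := by
          refine Finset.sum_congr rfl fun s1 _ => ?_
          rw [h4 s1, Finset.mul_sum]
      _ = ∑ x : (S × A) × A, ∑ s1 : S,
            P s a s1 * (d1 s1 x * PDLG (augP P) π' γ (PDLdelta x) f') := Finset.sum_comm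
      _ = ∑ x : (S × A) × A, D0 x * PDLG (augP P) π' γ (PDLdelta x) f' := by
          refine Finset.sum_congr rfl fun x _ => ?_
          rw [hD0 x, Finset.sum_mul]
          exact Finset.sum_congr rfl fun s1 _ => by ring
  -- one-step expansion of the mixed Q-value
  have hQmid : Qval (augP P) (augR r) γ π' (s, a') a
      = r s a + γ * PDLG (augP P) π' γ D0 f' := by
    have h0 : Qval (augP P) (augR r) γ π' (s, a') a
        = PDLG (augP P) π' γ (PDLdelta ((s, a'), a)) f' := rfl
    rw [h0, PDLG_step (augP P) π' γ hP' hπ' hγ0 hγ1]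
    congr 1
    · simp [PDLdelta, hf']
    · congr 2
      funext q
      rw [hD0def]
      simp [PDLdelta, ite_mul]
  -- Bellman for the core policy
  have hQcore : Qval P r γ πcNew s a
      = r s a + γ * ∑ s1 : S, P s a s1 * Vval P r γ πcNew s1 :=
    PDL_bellman P πcNew γ hP hπc hγ0 hγ1 r s a
  -- put everything together
  rw [hQmid, hQcore]
  have hrhs : ∑ s1 : S, P s a s1 *
      (∑' t : ℕ, γ ^ t * ∑ q : (S × A) × A,
        saDist (augP P) π' (d1 s1) t q * Adv P r γ πcNew q.1.1 q.2)
      = PDLG (augP P) π' γ D0 f' - ∑ s1 : S, P s a s1 * Vval P r γ πcNew s1 := by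
    calc ∑ s1 : S, P s a s1 *
        (∑' t : ℕ, γ ^ t * ∑ q : (S × A) × A,
          saDist (augP P) π' (d1 s1) t q * Adv P r γ πcNew q.1.1 q.2)
        = ∑ s1 : S, P s a s1 *
            (PDLG (augP P) π' γ (d1 s1) f' - Vval P r γ πcNew s1) := by
          refine Finset.sum_congr rfl fun s1 _ => ?_
          rw [hinner s1, htel s1, hmassV s1]
      _ = (∑ s1 : S, P s a s1 * PDLG (augP P) π' γ (d1 s1) f')
            - ∑ s1 : S, P s a s1 * Vval P r γ πcNew s1 := by
          rw [← Finset.sum_sub_distrib]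
          exact Finset.sum_congr rfl fun s1 _ => by ring
      _ = _ := by rw [hlin]
  rw [hrhs]
  ring



end
end
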